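/- arXiv:1806.08559 — 5 statements merged into one kernel-verified Lean document; each statement's English description precedes it below -/
import Mathlib

section
/- Let u be a nonconstant solution of -Δu = f(u) in B₁ with (0,0) a degenerate local maximum point satisfying u_xx(0,0) = u_xy(0,0) = 0, and assume ∂u/∂x ≢ 0 on B₁. Let n ≥ 3 be the smallest integer such that ∂ⁿu/∂x^{n-k}∂y^k(0,0) ≠ 0 for some k ∈ {0,…,n-1}, suppose n is odd, and suppose that ∂ˡu/∂xˡ(0,0) = 0 for every integer l with n < l < 2n-2 (so the smallest l > n with ∂ˡu/∂xˡ(0,0) ≠ 0 is l = 2n-2). Then (∂ⁿu/∂x^{n-1}∂y(0,0))² ≤ (2·((n-1)!)²/(2n-2)!) · u_yy(0,0) · ∂^{2n-2}u/∂x^{2n-2}(0,0). -/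
open Filter Metric Set

/-- Partial derivative in the first variable. -/
noncomputable def pdx (u : ℝ → ℝ → ℝ) : ℝ → ℝ → ℝ := fun x y => deriv (fun t => u t y) x

/-- Partial derivative in the second variable. -/
noncomputable def pdy (u : ℝ → ℝ → ℝ) : ℝ → ℝ → ℝ := fun x y => deriv (fun t => u x t) y

/-- `pd u i j = ∂^(i+j) u / ∂x^i ∂y^j`. -/
noncomputable def pd (u : ℝ → ℝ → ℝ) (i j : ℕ) : ℝ → ℝ → ℝ := pdx^[i] (pdy^[j] u)

/-- The open unit ball of `ℝ²`. -/
def B1 : Set (ℝ × ℝ) := Metric.ball (0 : ℝ × ℝ) 1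

/-- Real part of `(x+iy)^n`. -/
noncomputable def ReZ (n : ℕ) (x y : ℝ) : ℝ := (((x : ℂ) + (y : ℂ) * Complex.I) ^ n).re

/-- Imaginary part of `(x+iy)^n`. -/
noncomputable def ImZ (n : ℕ) (x y : ℝ) : ℝ := (((x : ℂ) + (y : ℂ) * Complex.I) ^ n).im

open scoped ContDiff

lemma B1_open : IsOpen B1 := Metric.isOpen_ball

lemma mem_B1_iff {x y : ℝ} : (x, y) ∈ B1 ↔ |x| < 1 ∧ |y| < 1 := by
  rw [B1, Metric.mem_ball, Prod.dist_eq]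
  simp [Real.dist_eq, max_lt_iff]

lemma memIoo {y δ : ℝ} (hy : |y| ≤ δ) (hδ : δ < 1) : y ∈ Set.Ioo (-1 : ℝ) 1 := by
  have := abs_lt.1 (lt_of_le_of_lt hy hδ)
  exact ⟨this.1, this.2⟩

lemma cascade {ψ : ℝ → ℝ} {δ C : ℝ} {k : ℕ} (hC : 0 ≤ C)
    (hdiff : ∀ y : ℝ, |y| ≤ δ → DifferentiableAt ℝ ψ y) (h0 : ψ 0 = 0)
    (hb : ∀ y : ℝ, |y| ≤ δ → |deriv ψ y| ≤ C * |y| ^ k) :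
    ∀ y : ℝ, |y| ≤ δ → |ψ y| ≤ C * |y| ^ (k + 1) := by
  intro y hy
  have hsub : ∀ z ∈ Set.uIcc (0 : ℝ) y, |z| ≤ |y| := by
    intro z hz
    rcases Set.mem_uIcc.1 hz with ⟨h1, h2⟩ | ⟨h1, h2⟩
    · rw [abs_of_nonneg h1]; exact h2.trans (le_abs_self y)
    · rw [abs_of_nonpos h2]; exact (neg_le_neg h1).trans (neg_le_abs y)
  have key := Convex.norm_image_sub_le_of_norm_deriv_le (𝕜 := ℝ)
    (f := ψ) (s := Set.uIcc (0 : ℝ) y) (C := C * |y| ^ k)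
    (fun z hz => hdiff z ((hsub z hz).trans hy))
    (fun z hz => by
      rw [Real.norm_eq_abs]
      refine (hb z ((hsub z hz).trans hy)).trans ?_
      exact mul_le_mul_of_nonneg_left (pow_le_pow_left₀ (abs_nonneg z) (hsub z hz) k) hC)
    (convex_uIcc _ _) Set.left_mem_uIcc Set.right_mem_uIcc
  rw [h0, sub_zero, sub_zero, Real.norm_eq_abs, Real.norm_eq_abs] at key
  calc |ψ y| ≤ C * |y| ^ k * |y| := key
    _ = C * |y| ^ (k + 1) := by ring

lemma iterSmooth {g : ℝ → ℝ} {s : Set ℝ} (hs : IsOpen s) (hg : ContDiffOn ℝ ∞ g s) :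
    ∀ k : ℕ, ContDiffOn ℝ ∞ (deriv^[k] g) s := by
  intro k; induction k with
  | zero => exact hg
  | succ k ih =>
    rw [Function.iterate_succ_apply']
    exact ih.deriv_of_isOpen hs (by simp)

lemma iterDiffAt {g : ℝ → ℝ} {s : Set ℝ} (hs : IsOpen s) (hg : ContDiffOn ℝ ∞ g s) (k : ℕ)
    {x : ℝ} (hx : x ∈ s) : DifferentiableAt ℝ (deriv^[k] g) x :=
  ((iterSmooth hs hg k).contDiffAt (hs.mem_nhds hx)).differentiableAt (by simp)

lemma iter_deriv_sub {g p : ℝ → ℝ} {s : Set ℝ} (hs : IsOpen s)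
    (hg : ContDiffOn ℝ ∞ g s) (hp : ContDiff ℝ ∞ p) :
    ∀ k : ℕ, ∀ x ∈ s, deriv^[k] (fun t => g t - p t) x = deriv^[k] g x - deriv^[k] p x := by
  intro k; induction k with
  | zero => intro x _; rfl
  | succ k ih =>
    intro x hx
    rw [Function.iterate_succ_apply', Function.iterate_succ_apply', Function.iterate_succ_apply']
    have hev : deriv^[k] (fun t => g t - p t) =ᶠ[nhds x]
        fun t => deriv^[k] g t - deriv^[k] p t :=
      Filter.eventuallyEq_of_mem (hs.mem_nhds hx) (fun t ht => ih t ht)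
    rw [hev.deriv_eq]
    exact deriv_sub (iterDiffAt hs hg k hx)
      ((hp.iterate_deriv k).differentiable (by simp) |>.differentiableAt)

noncomputable def tpoly (c : ℕ → ℝ) (r : ℕ) : ℝ → ℝ :=
  fun x => ∑ l ∈ Finset.range r, c l / (l.factorial : ℝ) * x ^ l

lemma tpoly_contDiff (c : ℕ → ℝ) (r : ℕ) : ContDiff ℝ ∞ (tpoly c r) := by
  unfold tpoly
  apply ContDiff.sum
  intro l _
  exact contDiff_const.mul (contDiff_id.pow l)

lemma tpoly_deriv (c : ℕ → ℝ) (r : ℕ) :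
    deriv (tpoly c r) = tpoly (fun l => c (l + 1)) (r - 1) := by
  funext x
  unfold tpoly
  rw [deriv_fun_sum (fun l _ => (differentiableAt_pow l).const_mul _)]
  have hterm : ∀ l : ℕ, deriv (fun y : ℝ => c l / (l.factorial : ℝ) * y ^ l) x
      = c l / (l.factorial : ℝ) * ((l : ℝ) * x ^ (l - 1)) := by
    intro l
    rw [deriv_const_mul _ (differentiableAt_pow l), deriv_pow_field]
  rw [Finset.sum_congr rfl (fun l _ => hterm l)]
  cases r with
  | zero => simp
  | succ r =>
    rw [Finset.sum_range_succ']
    have h0 : c 0 / ((0).factorial : ℝ) * ((0 : ℕ) * x ^ (0 - 1)) = 0 := by simp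
    rw [h0, add_zero]
    refine Finset.sum_congr (by simp) (fun l _ => ?_)
    have h1 : ((l + 1).factorial : ℝ) = ((l + 1 : ℕ) : ℝ) * (l.factorial : ℝ) := by
      rw [Nat.factorial_succ]; push_cast; ring
    have h2 : (l.factorial : ℝ) ≠ 0 := Nat.cast_ne_zero.2 l.factorial_ne_zero
    have h3 : ((l + 1 : ℕ) : ℝ) ≠ 0 := by positivity
    rw [Nat.add_sub_cancel, h1]
    field_simp

lemma tpoly_iter_deriv (c : ℕ → ℝ) (r k : ℕ) :
    deriv^[k] (tpoly c r) = tpoly (fun l => c (l + k)) (r - k) := by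
  induction k generalizing c r with
  | zero => simp [tpoly]
  | succ k ih =>
    rw [Function.iterate_succ_apply, tpoly_deriv, ih,
      show r - 1 - k = r - (k + 1) from by omega]
    rfl

lemma tpoly_zero_eval (c : ℕ → ℝ) (r : ℕ) (hr : 0 < r) : tpoly c r 0 = c 0 := by
  unfold tpoly
  rw [Finset.sum_eq_single 0]
  · simp
  · intro l _ hl; simp [zero_pow hl]
  · intro h; exact absurd (Finset.mem_range.2 hr) h

lemma tpoly_iter_deriv_zero (c : ℕ → ℝ) (r k : ℕ) (hk : k < r) :
    deriv^[k] (tpoly c r) 0 = c k := by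
  rw [tpoly_iter_deriv]
  have := tpoly_zero_eval (fun l => c (l + k)) (r - k) (by omega)
  simpa using this

lemma vanishing_bound : ∀ (m : ℕ) (g : ℝ → ℝ), ContDiffOn ℝ ∞ g (Set.Ioo (-1 : ℝ) 1) →
    (∀ l, l ≤ m → deriv^[l] g 0 = 0) →
    ∃ δ C : ℝ, 0 < δ ∧ δ < 1 ∧ 0 ≤ C ∧ ∀ x : ℝ, |x| ≤ δ → |g x| ≤ C * |x| ^ (m + 1) := by
  intro m
  induction m with
  | zero =>
    intro g hg h0
    have h0mem : (0 : ℝ) ∈ Set.Ioo (-1 : ℝ) 1 := by norm_num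
    have hc : ContinuousAt (deriv g) 0 := by
      have := (iterSmooth isOpen_Ioo hg 1).continuousOn.continuousAt (isOpen_Ioo.mem_nhds h0mem)
      simpa using this
    obtain ⟨ε, hε, hball⟩ := Metric.continuousAt_iff.1 hc 1 one_pos
    refine ⟨min (ε / 2) (1 / 2), |deriv g 0| + 1, by positivity,
      lt_of_le_of_lt (min_le_right _ _) (by norm_num), by positivity, ?_⟩
    intro x hx
    have hδ1 : min (ε / 2) (1 / 2) < 1 := lt_of_le_of_lt (min_le_right _ _) (by norm_num)
    have hmem : ∀ y : ℝ, |y| ≤ min (ε / 2) (1 / 2) → DifferentiableAt ℝ g y := fun y hy =>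
      ((hg.contDiffAt (isOpen_Ioo.mem_nhds (memIoo hy hδ1))).differentiableAt (by simp))
    have hb : ∀ y : ℝ, |y| ≤ min (ε / 2) (1 / 2) → |deriv g y| ≤ (|deriv g 0| + 1) * |y| ^ 0 := by
      intro y hy
      rw [pow_zero, mul_one]
      have hd : dist y 0 < ε := by
        rw [Real.dist_eq, sub_zero]
        have := hy.trans (min_le_left _ _); linarith
      have := hball hd
      rw [Real.dist_eq] at this
      have habs : |deriv g y| - |deriv g 0| ≤ |deriv g y - deriv g 0| := abs_sub_abs_le_abs_sub _ _
      linarith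
    exact cascade (by positivity) hmem (h0 0 le_rfl) hb x hx
  | succ m ih =>
    intro g hg h0
    have hg' : ContDiffOn ℝ ∞ (deriv g) (Set.Ioo (-1 : ℝ) 1) := by
      have := iterSmooth isOpen_Ioo hg 1; simpa using this
    obtain ⟨δ, C, hδ, hδ1, hC, hbound⟩ := ih (deriv g) hg' (fun l hl => by
      have := h0 (l + 1) (by omega)
      rwa [Function.iterate_succ_apply] at this)
    refine ⟨δ, C, hδ, hδ1, hC, ?_⟩
    have hmem : ∀ y : ℝ, |y| ≤ δ → DifferentiableAt ℝ g y := fun y hy =>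
      ((hg.contDiffAt (isOpen_Ioo.mem_nhds (memIoo hy hδ1))).differentiableAt (by simp))
    exact cascade hC hmem (h0 0 (by omega)) hbound

lemma taylor_bound {g : ℝ → ℝ} (hg : ContDiffOn ℝ ∞ g (Set.Ioo (-1 : ℝ) 1)) (m : ℕ) :
    ∃ δ C : ℝ, 0 < δ ∧ δ < 1 ∧ 0 ≤ C ∧ ∀ x : ℝ, |x| ≤ δ →
      |g x - ∑ l ∈ Finset.range (m + 1), deriv^[l] g 0 / (l.factorial : ℝ) * x ^ l|
        ≤ C * |x| ^ (m + 1) := by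
  have h0mem : (0 : ℝ) ∈ Set.Ioo (-1 : ℝ) 1 := by norm_num
  have hpoly := tpoly_contDiff (fun l => deriv^[l] g 0) (m + 1)
  have hG : ContDiffOn ℝ ∞ (fun t => g t - tpoly (fun l => deriv^[l] g 0) (m + 1) t)
      (Set.Ioo (-1 : ℝ) 1) := hg.sub hpoly.contDiffOn
  have hvan : ∀ l, l ≤ m →
      deriv^[l] (fun t => g t - tpoly (fun l => deriv^[l] g 0) (m + 1) t) 0 = 0 := by
    intro l hl
    rw [iter_deriv_sub isOpen_Ioo hg hpoly l 0 h0mem,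
      tpoly_iter_deriv_zero _ _ _ (by omega), sub_self]
  obtain ⟨δ, C, h1, h2, h3, h4⟩ := vanishing_bound m _ hG hvan
  exact ⟨δ, C, h1, h2, h3, fun x hx => by simpa [tpoly] using h4 x hx⟩

noncomputable def DyF (U : ℝ × ℝ → ℝ) : ℕ → ℝ × ℝ → ℝ
  | 0 => U
  | k + 1 => fun p => fderiv ℝ (DyF U k) p (0, 1)

lemma Dy_smooth {U : ℝ × ℝ → ℝ} (hU : ContDiffOn ℝ ∞ U B1) :
    ∀ k : ℕ, ContDiffOn ℝ ∞ (DyF U k) B1 := by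
  intro k; induction k with
  | zero => exact hU
  | succ k ih =>
    have h1 : ContDiffOn ℝ ∞ (fderiv ℝ (DyF U k)) B1 :=
      ih.fderiv_of_isOpen B1_open (by simp)
    exact h1.clm_apply contDiffOn_const

lemma Dy_pdy {u : ℝ → ℝ → ℝ} (hU : ContDiffOn ℝ ∞ (fun p : ℝ × ℝ => u p.1 p.2) B1) :
    ∀ (k : ℕ) (x y : ℝ), (x, y) ∈ B1 →
      pdy^[k] u x y = DyF (fun p : ℝ × ℝ => u p.1 p.2) k (x, y) := by
  intro k
  induction k with
  | zero => intro x y _; rfl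
  | succ k ih =>
    intro x y hxy
    rw [Function.iterate_succ_apply']
    show deriv (fun s => pdy^[k] u x s) y = _
    have hnb : {s : ℝ | (x, s) ∈ B1} ∈ nhds y := by
      have hcont : Continuous (fun s : ℝ => ((x : ℝ), s)) := continuous_const.prodMk continuous_id
      exact hcont.continuousAt.preimage_mem_nhds (B1_open.mem_nhds hxy)
    have hev : (fun s => pdy^[k] u x s) =ᶠ[nhds y]
        (fun s => DyF (fun p : ℝ × ℝ => u p.1 p.2) k (x, s)) :=
      Filter.eventually_of_mem hnb (fun s hs => ih x s hs)
    rw [hev.deriv_eq]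
    have hdiff : HasFDerivAt (DyF (fun p : ℝ × ℝ => u p.1 p.2) k)
        (fderiv ℝ (DyF (fun p : ℝ × ℝ => u p.1 p.2) k) (x, y)) (x, y) :=
      (((Dy_smooth hU k).contDiffAt (B1_open.mem_nhds hxy)).differentiableAt
        (by simp)).hasFDerivAt
    have hline : HasDerivAt (fun s : ℝ => ((x : ℝ), s)) (((0 : ℝ), (1 : ℝ))) y :=
      (hasDerivAt_const y x).prodMk (hasDerivAt_id y)
    exact (hdiff.comp_hasDerivAt y hline).deriv

lemma sect_pdx (G : ℝ → ℝ → ℝ) (b : ℝ) :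
    ∀ l : ℕ, (fun x => pdx^[l] G x b) = deriv^[l] (fun x => G x b) := by
  intro l; induction l with
  | zero => rfl
  | succ l ih =>
    rw [Function.iterate_succ_apply', Function.iterate_succ_apply', ← ih]
    rfl

lemma sect_pdy (G : ℝ → ℝ → ℝ) (a : ℝ) :
    ∀ k : ℕ, (fun y => pdy^[k] G a y) = deriv^[k] (fun y => G a y) := by
  intro k; induction k with
  | zero => rfl
  | succ k ih =>
    rw [Function.iterate_succ_apply', Function.iterate_succ_apply', ← ih]
    rfl

lemma y_taylor {u : ℝ → ℝ → ℝ} (hU : ContDiffOn ℝ ∞ (fun p : ℝ × ℝ => u p.1 p.2) B1) :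
    ∃ ρ C3 : ℝ, 0 < ρ ∧ ρ < 1 ∧ 0 ≤ C3 ∧ ∀ x y : ℝ, |x| ≤ ρ → |y| ≤ ρ →
      |u x y - (u x 0 + pdy^[1] u x 0 * y + pdy^[2] u x 0 * y ^ 2 / 2)| ≤ C3 * |y| ^ 3 := by
  have h00 : ((0 : ℝ), (0 : ℝ)) ∈ B1 := mem_B1_iff.2 (by norm_num)
  have hc : ContinuousAt (DyF (fun p : ℝ × ℝ => u p.1 p.2) 3) (0, 0) :=
    (Dy_smooth hU 3).continuousOn.continuousAt (B1_open.mem_nhds h00)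
  obtain ⟨ε, hε, hball⟩ := Metric.continuousAt_iff.1 hc 1 one_pos
  set M : ℝ := |DyF (fun p : ℝ × ℝ => u p.1 p.2) 3 (0, 0)| + 1 with hM
  set ρ : ℝ := min (ε / 2) (1 / 2) with hρdef
  have hρpos : 0 < ρ := by positivity
  have hρ1 : ρ < 1 := lt_of_le_of_lt (min_le_right _ _) (by norm_num)
  refine ⟨ρ, M, hρpos, hρ1, by positivity, ?_⟩
  intro x y hx hy
  have hxIoo : x ∈ Set.Ioo (-1 : ℝ) 1 := memIoo hx hρ1
  have hx1 : |x| < 1 := abs_lt.2 ⟨hxIoo.1, hxIoo.2⟩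
  -- the section in y is smooth
  have hsect : ContDiffOn ℝ ∞ (fun s => u x s) (Set.Ioo (-1 : ℝ) 1) := by
    have hmap : Set.MapsTo (fun s : ℝ => ((x : ℝ), s)) (Set.Ioo (-1 : ℝ) 1) B1 := by
      intro s hs
      exact mem_B1_iff.2 ⟨hx1, abs_lt.2 ⟨hs.1, hs.2⟩⟩
    have := hU.comp ((contDiff_const.prodMk contDiff_id).contDiffOn) hmap
    exact this
  -- bound on the third derivative
  have hD3 : ∀ s : ℝ, |s| ≤ ρ → |deriv^[3] (fun s => u x s) s| ≤ M := by
    intro s hs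
    have hmem : ((x : ℝ), s) ∈ B1 := mem_B1_iff.2 ⟨hx1, lt_of_le_of_lt hs hρ1⟩
    have h1 : deriv^[3] (fun s => u x s) s = pdy^[3] u x s := by
      rw [← sect_pdy u x 3]
    rw [h1, Dy_pdy hU 3 x s hmem]
    have hd : dist ((x : ℝ), s) ((0 : ℝ), (0 : ℝ)) < ε := by
      rw [Prod.dist_eq]
      simp only [Real.dist_eq, sub_zero]
      have h2 : |x| ≤ ε / 2 := hx.trans (min_le_left _ _)
      have h3 : |s| ≤ ε / 2 := hs.trans (min_le_left _ _)
      have : max |x| |s| ≤ ε / 2 := max_le h2 h3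
      linarith
    have := hball hd
    rw [Real.dist_eq] at this
    have habs := abs_sub_abs_le_abs_sub (DyF (fun p : ℝ × ℝ => u p.1 p.2) 3 (x, s))
      (DyF (fun p : ℝ × ℝ => u p.1 p.2) 3 (0, 0))
    rw [hM]; linarith
  -- the remainder function
  set c : ℕ → ℝ := fun l => deriv^[l] (fun s => u x s) 0 with hcdef
  set φ : ℝ → ℝ := fun s => u x s - tpoly c 3 s with hφdef
  have hpoly := tpoly_contDiff c 3
  have hφsm : ContDiffOn ℝ ∞ φ (Set.Ioo (-1 : ℝ) 1) := hsect.sub hpoly.contDiffOn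
  have h0mem : (0 : ℝ) ∈ Set.Ioo (-1 : ℝ) 1 := by norm_num
  have hvan : ∀ k : ℕ, k ≤ 2 → deriv^[k] φ 0 = 0 := by
    intro k hk
    rw [hφdef]
    rw [iter_deriv_sub isOpen_Ioo hsect hpoly k 0 h0mem,
      tpoly_iter_deriv_zero _ _ _ (by omega), sub_self]
  have hφ3 : ∀ s : ℝ, |s| ≤ ρ → |deriv^[3] φ s| ≤ M := by
    intro s hs
    rw [hφdef, iter_deriv_sub isOpen_Ioo hsect hpoly 3 s (memIoo hs hρ1),
      tpoly_iter_deriv c 3 3]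
    have : tpoly (fun l => c (l + 3)) (3 - 3) (s : ℝ) = 0 := by simp [tpoly]
    rw [this, sub_zero]
    exact hD3 s hs
  have hMnn : (0 : ℝ) ≤ M := by rw [hM]; positivity
  -- cascades
  have s2 : ∀ s : ℝ, |s| ≤ ρ → |deriv^[2] φ s| ≤ M * |s| ^ 1 := by
    refine cascade hMnn (fun s hs => iterDiffAt isOpen_Ioo hφsm 2 (memIoo hs hρ1))
      (hvan 2 le_rfl) ?_
    intro s hs
    rw [pow_zero, mul_one, show deriv (deriv^[2] φ) = deriv^[3] φ from
      (Function.iterate_succ_apply' deriv 2 φ).symm]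
    exact hφ3 s hs
  have s1 : ∀ s : ℝ, |s| ≤ ρ → |deriv^[1] φ s| ≤ M * |s| ^ 2 := by
    refine cascade hMnn (fun s hs => iterDiffAt isOpen_Ioo hφsm 1 (memIoo hs hρ1))
      (hvan 1 (by norm_num)) ?_
    intro s hs
    rw [show deriv (deriv^[1] φ) = deriv^[2] φ from
      (Function.iterate_succ_apply' deriv 1 φ).symm]
    exact s2 s hs
  have s0 : ∀ s : ℝ, |s| ≤ ρ → |φ s| ≤ M * |s| ^ 3 := by
    refine cascade hMnn (fun s hs => iterDiffAt isOpen_Ioo hφsm 0 (memIoo hs hρ1))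
      (hvan 0 (by norm_num)) ?_
    intro s hs
    rw [show deriv φ = deriv^[1] φ from rfl]
    exact s1 s hs
  have hfin := s0 y hy
  have hφy : φ y = u x y - (u x 0 + pdy^[1] u x 0 * y + pdy^[2] u x 0 * y ^ 2 / 2) := by
    rw [hφdef]
    have e0 : c 0 = u x 0 := rfl
    have e1 : c 1 = pdy^[1] u x 0 := congrFun (sect_pdy u x 1).symm 0
    have e2 : c 2 = pdy^[2] u x 0 := congrFun (sect_pdy u x 2).symm 0
    simp only [tpoly]
    rw [Finset.sum_range_succ, Finset.sum_range_succ, Finset.sum_range_succ,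
      Finset.sum_range_zero, e0, e1, e2]
    simp [Nat.factorial]
    ring
  rwa [hφy] at hfin

lemma le_zero_of_le_lin {e M δ : ℝ} (hδ : 0 < δ) (h : ∀ x : ℝ, 0 < x → x ≤ δ → e ≤ M * x) :
    e ≤ 0 := by
  by_contra hc
  push_neg at hc
  have hM : 0 < M := by
    have := h δ hδ le_rfl
    nlinarith
  have hx0 : 0 < min δ (e / (2 * M)) := lt_min hδ (by positivity)
  have h1 := h _ hx0 (min_le_left _ _)
  have h2 : M * min δ (e / (2 * M)) ≤ M * (e / (2 * M)) :=
    mul_le_mul_of_nonneg_left (min_le_right _ _) hM.le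
  have h3 : M * (e / (2 * M)) = e / 2 := by field_simp
  linarith

set_option maxHeartbeats 1600000 in
/-- Morse Lemma for degenerate maximum points: the inequality in the
case `n` odd and `l = 2n-2`. -/
theorem degenerate_max_odd_inequality
    (u : ℝ → ℝ → ℝ) (f : ℝ → ℝ)
    (hu : ContDiffOn ℝ (⊤ : ℕ∞) (fun p : ℝ × ℝ => u p.1 p.2) B1)
    (hf : ContDiff ℝ (⊤ : ℕ∞) f)
    (hpde : ∀ x y : ℝ, (x, y) ∈ B1 → -(pd u 2 0 x y + pd u 0 2 x y) = f (u x y))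
    (hnc : ¬ ∃ c : ℝ, ∀ x y : ℝ, (x, y) ∈ B1 → u x y = c)
    (hcx : pd u 1 0 0 0 = 0) (hcy : pd u 0 1 0 0 = 0)
    (hmax : IsLocalMax (fun p : ℝ × ℝ => u p.1 p.2) (0, 0))
    (hdeg : pd u 2 0 0 0 * pd u 0 2 0 0 - (pd u 1 1 0 0) ^ 2 = 0)
    (hxx : pd u 2 0 0 0 = 0) (hxy : pd u 1 1 0 0 = 0)
    (hux : ¬ ∀ x y : ℝ, (x, y) ∈ B1 → pd u 1 0 x y = 0)
    (n : ℕ) (hn3 : 3 ≤ n)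
    (hnex : ∃ k, k < n ∧ pd u (n - k) k 0 0 ≠ 0)
    (hnmin : ∀ m, 3 ≤ m → m < n → ∀ k, k < m → pd u (m - k) k 0 0 = 0)
    (hnodd : Odd n)
    (hvanish : ∀ l : ℕ, n < l → l < 2 * n - 2 → pd u l 0 0 0 = 0) :
    (pd u (n - 1) 1 0 0) ^ 2 ≤
      2 * ((n - 1).factorial : ℝ) ^ 2 / ((2 * n - 2).factorial : ℝ)
        * (pd u 0 2 0 0 * pd u (2 * n - 2) 0 0 0) := by
  obtain ⟨N, rfl⟩ : ∃ N, n = N + 1 := ⟨n - 1, by omega⟩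
  have hN2 : 2 ≤ N := by omega
  have hodd : Odd (N + 1) := hnodd
  rw [show N + 1 - 1 = N from rfl, show 2 * (N + 1) - 2 = 2 * N from by omega]
  have hu' : ContDiffOn ℝ ∞ (fun p : ℝ × ℝ => u p.1 p.2) B1 := hu.of_le (by simp)
  -- smoothness of the x-sections of the y-derivatives
  have hvj : ∀ j : ℕ, ContDiffOn ℝ ∞ (fun x => pdy^[j] u x 0) (Set.Ioo (-1 : ℝ) 1) := by
    intro j
    have hmap : Set.MapsTo (fun x : ℝ => ((x : ℝ), (0 : ℝ))) (Set.Ioo (-1 : ℝ) 1) B1 :=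
      fun x hx => mem_B1_iff.2 ⟨abs_lt.2 ⟨hx.1, hx.2⟩, by norm_num⟩
    have hs := (Dy_smooth hu' j).comp ((contDiff_id.prodMk contDiff_const).contDiffOn) hmap
    exact hs.congr (fun x hx => Dy_pdy hu' j x 0 (hmap hx))
  have hcoef : ∀ j l : ℕ, deriv^[l] (fun x => pdy^[j] u x 0) 0 = pd u l j 0 0 :=
    fun j l => (congrFun (sect_pdx (pdy^[j] u) 0 l).symm 0 : _)
  obtain ⟨δ0, C0, hδ0, hδ0', hC0, hB0⟩ := taylor_bound (hvj 0) (2 * N)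
  obtain ⟨δ1, C1, hδ1, hδ1', hC1, hB1⟩ := taylor_bound (hvj 1) N
  obtain ⟨δ2, C2, hδ2, hδ2', hC2, hB2⟩ := taylor_bound (hvj 2) 0
  obtain ⟨ρ, C3, hρ, hρ', hC3, hB3⟩ := y_taylor hu'
  -- evaluation of the three Taylor polynomials
  have hS0 : ∀ x : ℝ, ∑ l ∈ Finset.range (2 * N + 1),
      deriv^[l] (fun x => pdy^[0] u x 0) 0 / (l.factorial : ℝ) * x ^ l
      = u 0 0 + pd u (N + 1) 0 0 0 / (((N + 1).factorial : ℝ)) * x ^ (N + 1)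
        + pd u (2 * N) 0 0 0 / (((2 * N).factorial : ℝ)) * x ^ (2 * N) := by
    intro x
    have hzero : ∀ l ∈ Finset.range (2 * N + 1), l ∉ ({0, N + 1, 2 * N} : Finset ℕ) →
        deriv^[l] (fun x => pdy^[0] u x 0) 0 / (l.factorial : ℝ) * x ^ l = 0 := by
      intro l hl hlnot
      simp only [Finset.mem_insert, Finset.mem_singleton] at hlnot
      push_neg at hlnot
      obtain ⟨hl0, hlN, hl2N⟩ := hlnot
      have hlr : l < 2 * N + 1 := Finset.mem_range.1 hl
      have hpd : pd u l 0 0 0 = 0 := by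
        rcases eq_or_ne l 1 with rfl | h1
        · exact hcx
        rcases eq_or_ne l 2 with rfl | h2
        · exact hxx
        by_cases h3 : l ≤ N
        · have := hnmin l (by omega) (by omega) 0 (by omega)
          simpa using this
        · exact hvanish l (by omega) (by omega)
      rw [hcoef 0 l, hpd, zero_div, zero_mul]
    have hsub : ({0, N + 1, 2 * N} : Finset ℕ) ⊆ Finset.range (2 * N + 1) := by
      intro l hl
      simp only [Finset.mem_insert, Finset.mem_singleton] at hl
      rcases hl with rfl | rfl | rfl <;> exact Finset.mem_range.2 (by omega)
    rw [← Finset.sum_subset hsub hzero]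
    have hne1 : (0 : ℕ) ∉ ({N + 1, 2 * N} : Finset ℕ) := by simp; omega
    have hne2 : (N + 1 : ℕ) ∉ ({2 * N} : Finset ℕ) := by simp; omega
    rw [show ({0, N + 1, 2 * N} : Finset ℕ) = insert 0 (insert (N + 1) {2 * N}) from rfl,
      Finset.sum_insert hne1, Finset.sum_insert hne2, Finset.sum_singleton,
      hcoef 0 0, hcoef 0 (N + 1), hcoef 0 (2 * N),
      show pd u 0 0 0 0 = u 0 0 from rfl]
    simp [Nat.factorial]
    ring
  have hS1 : ∀ x : ℝ, ∑ l ∈ Finset.range (N + 1),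
      deriv^[l] (fun x => pdy^[1] u x 0) 0 / (l.factorial : ℝ) * x ^ l
      = pd u N 1 0 0 / ((N.factorial : ℝ)) * x ^ N := by
    intro x
    have hzero : ∀ l ∈ Finset.range (N + 1), l ∉ ({N} : Finset ℕ) →
        deriv^[l] (fun x => pdy^[1] u x 0) 0 / (l.factorial : ℝ) * x ^ l = 0 := by
      intro l hl hlnot
      have hlN : l ≠ N := by simpa using hlnot
      have hlr : l < N + 1 := Finset.mem_range.1 hl
      have hpd : pd u l 1 0 0 = 0 := by
        rcases eq_or_ne l 0 with rfl | h0
        · exact hcy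
        rcases eq_or_ne l 1 with rfl | h1
        · exact hxy
        · have := hnmin (l + 1) (by omega) (by omega) 1 (by omega)
          simpa using this
      rw [hcoef 1 l, hpd, zero_div, zero_mul]
    have hsub : ({N} : Finset ℕ) ⊆ Finset.range (N + 1) := by
      intro l hl; simp only [Finset.mem_singleton] at hl
      exact Finset.mem_range.2 (by omega)
    rw [← Finset.sum_subset hsub hzero, Finset.sum_singleton, hcoef 1 N]
  have hS2 : ∀ x : ℝ, ∑ l ∈ Finset.range (0 + 1),
      deriv^[l] (fun x => pdy^[2] u x 0) 0 / (l.factorial : ℝ) * x ^ l = pd u 0 2 0 0 := by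
    intro x
    rw [show (0 + 1 : ℕ) = 1 from rfl, Finset.sum_range_one, hcoef 2 0]
    simp
  -- the local maximum property in quantitative form
  obtain ⟨ρm, hρm, hmaxball⟩ : ∃ ρm : ℝ, 0 < ρm ∧ ∀ p : ℝ × ℝ, dist p (0, 0) ≤ ρm →
      u p.1 p.2 ≤ u 0 0 := by
    obtain ⟨ε, hε, hb⟩ := Metric.eventually_nhds_iff.1 hmax
    exact ⟨ε / 2, by positivity, fun p hp => hb (lt_of_le_of_lt hp (by linarith))⟩
  -- master estimate along the curves y = t * x ^ N
  have master : ∀ t : ℝ, ∃ δ C : ℝ, 0 < δ ∧ δ ≤ 1 ∧ 0 ≤ C ∧ ∀ x : ℝ, |x| ≤ δ →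
      pd u (N + 1) 0 0 0 / (((N + 1).factorial : ℝ)) * x ^ (N + 1)
        + (pd u 0 2 0 0 / 2 * t ^ 2 + pd u N 1 0 0 / (N.factorial : ℝ) * t
            + pd u (2 * N) 0 0 0 / ((2 * N).factorial : ℝ)) * x ^ (2 * N)
        ≤ C * |x| ^ (2 * N + 1) := by
    intro t
    set m0 : ℝ := min δ0 (min δ1 (min δ2 (min ρ ρm))) with hm0
    have hm0pos : 0 < m0 := lt_min hδ0 (lt_min hδ1 (lt_min hδ2 (lt_min hρ hρm)))
    have hm0le1 : m0 ≤ 1 := le_trans (min_le_left _ _) hδ0'.le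
    have htpos : (0 : ℝ) < 1 + |t| := by positivity
    refine ⟨m0 / (1 + |t|), C0 + |t| * C1 + t ^ 2 * C2 / 2 + |t| ^ 3 * C3,
      by positivity, ?_, by positivity, ?_⟩
    · rw [div_le_one htpos]
      nlinarith [abs_nonneg t]
    intro x hx
    have hxm0 : |x| ≤ m0 := by
      refine hx.trans ?_
      rw [div_le_iff₀ htpos]
      nlinarith [hm0pos.le, abs_nonneg t]
    have hx1 : |x| ≤ 1 := hxm0.trans hm0le1
    set y : ℝ := t * x ^ N with hy
    have hyabs : |y| = |t| * |x| ^ N := by rw [hy, abs_mul, abs_pow]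
    have hxNle : |x| ^ N ≤ |x| := by
      have := pow_le_pow_of_le_one (abs_nonneg x) hx1 (show 1 ≤ N by omega)
      simpa using this
    have hyle : |y| ≤ m0 := by
      have h1 : |y| ≤ |t| * |x| := by
        rw [hyabs]
        exact mul_le_mul_of_nonneg_left hxNle (abs_nonneg t)
      have h2 : |t| * |x| ≤ |t| * (m0 / (1 + |t|)) :=
        mul_le_mul_of_nonneg_left hx (abs_nonneg t)
      have h3 : |t| * (m0 / (1 + |t|)) ≤ m0 := by
        rw [show |t| * (m0 / (1 + |t|)) = m0 * |t| / (1 + |t|) by ring, div_le_iff₀ htpos]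
        nlinarith [hm0pos.le, abs_nonneg t]
      linarith
    have hxδ0 : |x| ≤ δ0 := hxm0.trans (min_le_left _ _)
    have hxδ1 : |x| ≤ δ1 := hxm0.trans ((min_le_right _ _).trans (min_le_left _ _))
    have hxδ2 : |x| ≤ δ2 := hxm0.trans ((min_le_right _ _).trans
      ((min_le_right _ _).trans (min_le_left _ _)))
    have hxρ : |x| ≤ ρ := hxm0.trans ((min_le_right _ _).trans
      ((min_le_right _ _).trans ((min_le_right _ _).trans (min_le_left _ _))))
    have hxρm : |x| ≤ ρm := hxm0.trans ((min_le_right _ _).trans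
      ((min_le_right _ _).trans ((min_le_right _ _).trans (min_le_right _ _))))
    have hyρ : |y| ≤ ρ := hyle.trans ((min_le_right _ _).trans
      ((min_le_right _ _).trans ((min_le_right _ _).trans (min_le_left _ _))))
    have hyρm : |y| ≤ ρm := hyle.trans ((min_le_right _ _).trans
      ((min_le_right _ _).trans ((min_le_right _ _).trans (min_le_right _ _))))
    have hmaxx : u x y ≤ u 0 0 := by
      have hd : dist ((x : ℝ), y) ((0 : ℝ), (0 : ℝ)) ≤ ρm := by
        rw [Prod.dist_eq]
        simp only [Real.dist_eq, sub_zero]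
        exact max_le hxρm hyρm
      exact hmaxball (x, y) hd
    have e0 := hB0 x hxδ0
    rw [hS0 x] at e0
    simp only [Function.iterate_zero, id] at e0
    have e1 := hB1 x hxδ1
    rw [hS1 x] at e1
    have e2 := hB2 x hxδ2
    rw [hS2 x] at e2
    have e2' : |pdy^[2] u x 0 - pd u 0 2 0 0| ≤ C2 * |x| := by simpa using e2
    have e3 := hB3 x y hxρ hyρ
    set X : ℝ := |x| ^ (2 * N + 1) with hX
    have hXnn : (0 : ℝ) ≤ X := by positivity
    set r0 : ℝ := u x 0 - (u 0 0 + pd u (N + 1) 0 0 0 / (((N + 1).factorial : ℝ)) * x ^ (N + 1)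
      + pd u (2 * N) 0 0 0 / (((2 * N).factorial : ℝ)) * x ^ (2 * N)) with hr0
    set r1 : ℝ := pdy^[1] u x 0 - pd u N 1 0 0 / ((N.factorial : ℝ)) * x ^ N with hr1
    set r2 : ℝ := pdy^[2] u x 0 - pd u 0 2 0 0 with hr2
    set r3 : ℝ := u x y - (u x 0 + pdy^[1] u x 0 * y + pdy^[2] u x 0 * y ^ 2 / 2) with hr3
    have hq1 : |x| ^ (N + 1) * |x| ^ N = X := by
      rw [hX, ← pow_add]
      congr 1
      omega
    have hq2 : |x| * (|x| ^ N * |x| ^ N) = X := by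
      rw [hX, ← pow_add, ← pow_succ']
      congr 1
      omega
    have hy2 : y ^ 2 = t ^ 2 * (|x| ^ N * |x| ^ N) := by
      have hxx : x ^ N * x ^ N = |x| ^ N * |x| ^ N := by
        calc x ^ N * x ^ N = |x ^ N| * |x ^ N| := (abs_mul_abs_self _).symm
          _ = |x| ^ N * |x| ^ N := by rw [abs_pow]
      calc y ^ 2 = t ^ 2 * (x ^ N * x ^ N) := by rw [hy]; ring
        _ = t ^ 2 * (|x| ^ N * |x| ^ N) := by rw [hxx]
    have hy3 : |y| ^ 3 ≤ |t| ^ 3 * X := by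
      rw [hyabs, mul_pow, ← pow_mul]
      refine mul_le_mul_of_nonneg_left ?_ (by positivity)
      rw [hX]
      exact pow_le_pow_of_le_one (abs_nonneg x) hx1 (by omega)
    have b0 : -r0 ≤ C0 * X := (neg_le_abs r0).trans e0
    have b1 : -(r1 * y) ≤ C1 * |t| * X := by
      have h1 : |r1 * y| ≤ (C1 * |x| ^ (N + 1)) * (|t| * |x| ^ N) := by
        rw [abs_mul, hyabs]
        exact mul_le_mul e1 le_rfl (by positivity) (by positivity)
      have h2 : (C1 * |x| ^ (N + 1)) * (|t| * |x| ^ N) = C1 * |t| * X := by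
        rw [← hq1]; ring
      exact (neg_le_abs _).trans (h1.trans_eq h2)
    have b2 : -(r2 * y ^ 2 / 2) ≤ C2 * t ^ 2 / 2 * X := by
      have h1 : |r2 * y ^ 2 / 2| ≤ (C2 * |x|) * (t ^ 2 * (|x| ^ N * |x| ^ N)) / 2 := by
        rw [abs_div, abs_mul, show |(2 : ℝ)| = 2 by norm_num]
        have hy2' : |y ^ 2| = t ^ 2 * (|x| ^ N * |x| ^ N) := by
          rw [abs_of_nonneg (sq_nonneg y), hy2]
        rw [hy2']
        apply div_le_div_of_nonneg_right ?_ (by norm_num)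
        exact mul_le_mul e2' le_rfl (by positivity) (by positivity)
      have h2 : (C2 * |x|) * (t ^ 2 * (|x| ^ N * |x| ^ N)) / 2 = C2 * t ^ 2 / 2 * X := by
        rw [← hq2]; ring
      exact (neg_le_abs _).trans (h1.trans_eq h2)
    have b3 : -r3 ≤ C3 * |t| ^ 3 * X := by
      refine (neg_le_abs _).trans (e3.trans ?_)
      calc C3 * |y| ^ 3 ≤ C3 * (|t| ^ 3 * X) := mul_le_mul_of_nonneg_left hy3 hC3
        _ = C3 * |t| ^ 3 * X := by ring
    have hiden : pd u (N + 1) 0 0 0 / (((N + 1).factorial : ℝ)) * x ^ (N + 1)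
        + (pd u 0 2 0 0 / 2 * t ^ 2 + pd u N 1 0 0 / (N.factorial : ℝ) * t
            + pd u (2 * N) 0 0 0 / ((2 * N).factorial : ℝ)) * x ^ (2 * N)
        = (u x y - u 0 0) - r0 - r1 * y - r2 * y ^ 2 / 2 - r3 := by
      rw [hr0, hr1, hr2, hr3, hy]
      ring
    have hCX : (C0 + |t| * C1 + t ^ 2 * C2 / 2 + |t| ^ 3 * C3) * X
        = C0 * X + C1 * |t| * X + C2 * t ^ 2 / 2 * X + C3 * |t| ^ 3 * X := by ring
    have hneg : u x y - u 0 0 ≤ 0 := by linarith [hmaxx]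
    clear_value X r0 r1 r2 r3 y
    rw [hiden, hCX]
    linarith [b0, b1, b2, b3, hneg]
  -- the (N+1)-st pure x-derivative vanishes since N+1 is odd
  have hfacN1 : (0 : ℝ) < (((N + 1).factorial : ℝ)) := by exact_mod_cast (N + 1).factorial_pos
  have ha : pd u (N + 1) 0 0 0 = 0 := by
    obtain ⟨δ, C, hδ, hδle1, hC, hb⟩ := master 0
    set B : ℝ := pd u (2 * N) 0 0 0 / (((2 * N).factorial : ℝ)) with hB
    have h1 : pd u (N + 1) 0 0 0 / (((N + 1).factorial : ℝ)) ≤ 0 := by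
      apply le_zero_of_le_lin hδ (M := C + |B|)
      intro x hx0 hxδ
      have hax : |x| = x := abs_of_nonneg hx0.le
      have hbx := hb x (by rwa [hax])
      rw [hax] at hbx
      have hx1 : x ≤ 1 := hxδ.trans hδle1
      have p1 : x ^ (2 * N + 1) ≤ x ^ (N + 2) := pow_le_pow_of_le_one hx0.le hx1 (by omega)
      have p2 : x ^ (2 * N) ≤ x ^ (N + 2) := pow_le_pow_of_le_one hx0.le hx1 (by omega)
      have p3 : (0 : ℝ) ≤ x ^ (2 * N) := by positivity
      have p4 : x ^ (N + 2) = x * x ^ (N + 1) := by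
        rw [show N + 2 = (N + 1) + 1 from rfl, pow_succ']
      have q1 : C * x ^ (2 * N + 1) ≤ C * x ^ (N + 2) := mul_le_mul_of_nonneg_left p1 hC
      have q2 : (-B) * x ^ (2 * N) ≤ |B| * x ^ (2 * N) :=
        mul_le_mul_of_nonneg_right (neg_le_abs B) p3
      have q3 : |B| * x ^ (2 * N) ≤ |B| * x ^ (N + 2) :=
        mul_le_mul_of_nonneg_left p2 (abs_nonneg B)
      have q4 : ((C + |B|) * x) * x ^ (N + 1) = C * x ^ (N + 2) + |B| * x ^ (N + 2) := by
        rw [p4]; ring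
      have hgoal : pd u (N + 1) 0 0 0 / (((N + 1).factorial : ℝ)) * x ^ (N + 1)
          ≤ ((C + |B|) * x) * x ^ (N + 1) := by
        norm_num at hbx
        linarith [hbx, q1, q2, q3, q4]
      exact le_of_mul_le_mul_right hgoal (pow_pos hx0 (N + 1))
    have h2 : -(pd u (N + 1) 0 0 0 / (((N + 1).factorial : ℝ))) ≤ 0 := by
      apply le_zero_of_le_lin hδ (M := C + |B|)
      intro s hs0 hsδ
      have habs : |(-s : ℝ)| = s := by rw [abs_neg, abs_of_nonneg hs0.le]
      have hbx := hb (-s) (by rwa [habs])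
      rw [habs, Odd.neg_pow hodd, Even.neg_pow ⟨N, by ring⟩] at hbx
      have hs1 : s ≤ 1 := hsδ.trans hδle1
      have p1 : s ^ (2 * N + 1) ≤ s ^ (N + 2) := pow_le_pow_of_le_one hs0.le hs1 (by omega)
      have p2 : s ^ (2 * N) ≤ s ^ (N + 2) := pow_le_pow_of_le_one hs0.le hs1 (by omega)
      have p3 : (0 : ℝ) ≤ s ^ (2 * N) := by positivity
      have p4 : s ^ (N + 2) = s * s ^ (N + 1) := by
        rw [show N + 2 = (N + 1) + 1 from rfl, pow_succ']
      have q1 : C * s ^ (2 * N + 1) ≤ C * s ^ (N + 2) := mul_le_mul_of_nonneg_left p1 hC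
      have q2 : (-B) * s ^ (2 * N) ≤ |B| * s ^ (2 * N) :=
        mul_le_mul_of_nonneg_right (neg_le_abs B) p3
      have q3 : |B| * s ^ (2 * N) ≤ |B| * s ^ (N + 2) :=
        mul_le_mul_of_nonneg_left p2 (abs_nonneg B)
      have q4 : ((C + |B|) * s) * s ^ (N + 1) = C * s ^ (N + 2) + |B| * s ^ (N + 2) := by
        rw [p4]; ring
      have hgoal : (-(pd u (N + 1) 0 0 0 / (((N + 1).factorial : ℝ)))) * s ^ (N + 1)
          ≤ ((C + |B|) * s) * s ^ (N + 1) := by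
        norm_num at hbx
        linarith [hbx, q1, q2, q3, q4]
      exact le_of_mul_le_mul_right hgoal (pow_pos hs0 (N + 1))
    have hA0 : pd u (N + 1) 0 0 0 / (((N + 1).factorial : ℝ)) = 0 :=
      le_antisymm h1 (by linarith)
    field_simp [hfacN1.ne'] at hA0
    simpa using hA0
  -- the quadratic in t is nonpositive
  have hK : ∀ t : ℝ, pd u 0 2 0 0 / 2 * t ^ 2 + pd u N 1 0 0 / (N.factorial : ℝ) * t
      + pd u (2 * N) 0 0 0 / ((2 * N).factorial : ℝ) ≤ 0 := by
    intro t
    obtain ⟨δ, C, hδ, hδle1, hC, hb⟩ := master t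
    apply le_zero_of_le_lin hδ (M := C)
    intro x hx0 hxδ
    have hax : |x| = x := abs_of_nonneg hx0.le
    have hbx := hb x (by rwa [hax])
    rw [hax, ha] at hbx
    have hps : x ^ (2 * N + 1) = x ^ (2 * N) * x := pow_succ x (2 * N)
    have hgoal : (pd u 0 2 0 0 / 2 * t ^ 2 + pd u N 1 0 0 / (N.factorial : ℝ) * t
        + pd u (2 * N) 0 0 0 / ((2 * N).factorial : ℝ)) * x ^ (2 * N)
        ≤ (C * x) * x ^ (2 * N) := by
      rw [hps] at hbx
      norm_num at hbx
      linarith [hbx]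
    exact le_of_mul_le_mul_right hgoal (pow_pos hx0 (2 * N))
  -- conclude via the discriminant
  have hq : ∀ s : ℝ, 0 ≤ (-(pd u 0 2 0 0 / 2)) * (s * s)
      + (-(pd u N 1 0 0 / (N.factorial : ℝ))) * s
      + (-(pd u (2 * N) 0 0 0 / ((2 * N).factorial : ℝ))) := by
    intro s
    have := hK s
    nlinarith [this]
  have hdisc := discrim_le_zero hq
  rw [discrim] at hdisc
  have h1 : (0 : ℝ) < (N.factorial : ℝ) := by exact_mod_cast N.factorial_pos
  have h2 : (0 : ℝ) < ((2 * N).factorial : ℝ) := by exact_mod_cast (2 * N).factorial_pos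
  have key2 : (pd u N 1 0 0 / (N.factorial : ℝ)) ^ 2
      ≤ 2 * (pd u 0 2 0 0 * pd u (2 * N) 0 0 0) / ((2 * N).factorial : ℝ) := by
    have hr : (-(pd u N 1 0 0 / (N.factorial : ℝ))) ^ 2
        - 4 * -(pd u 0 2 0 0 / 2) * -(pd u (2 * N) 0 0 0 / ((2 * N).factorial : ℝ))
        = (pd u N 1 0 0 / (N.factorial : ℝ)) ^ 2
          - 2 * (pd u 0 2 0 0 * pd u (2 * N) 0 0 0) / ((2 * N).factorial : ℝ) := by ring
    linarith [hdisc, hr]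
  calc (pd u N 1 0 0) ^ 2
      = (pd u N 1 0 0 / (N.factorial : ℝ)) ^ 2 * (N.factorial : ℝ) ^ 2 := by field_simp
    _ ≤ (2 * (pd u 0 2 0 0 * pd u (2 * N) 0 0 0) / ((2 * N).factorial : ℝ))
          * (N.factorial : ℝ) ^ 2 := mul_le_mul_of_nonneg_right key2 (by positivity)
    _ = 2 * (N.factorial : ℝ) ^ 2 / ((2 * N).factorial : ℝ)
          * (pd u 0 2 0 0 * pd u (2 * N) 0 0 0) := by ring
end

section
/- There is no solution u of -Δu = f(u) in B₁ such that u(x,y) = u(0,0) - x⁴ - y⁴ + o((x²+y²)²) as (x,y) → (0,0); that is, if u is a smooth function on B₁ with -Δu = f(u) in B₁, then the function (x,y) ↦ u(x,y) - u(0,0) + x⁴ + y⁴ is not o((x²+y²)²) as (x,y) → (0,0). -/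
open Filter Metric Set

lemma pd20 (u : ℝ → ℝ → ℝ) (x y : ℝ) : pd u 2 0 x y = deriv (deriv (fun t => u t y)) x := rfl
lemma pd02 (u : ℝ → ℝ → ℝ) (x y : ℝ) : pd u 0 2 x y = deriv (deriv (fun t => u x t)) y := rfl

-- 1D second derivative test at a local max
lemma sdt {g : ℝ → ℝ} {a m : ℝ} (hmax : IsLocalMax g a)
    (hg : ∀ᶠ t in nhds a, DifferentiableAt ℝ g t)
    (hg2 : HasDerivAt (deriv g) m a) : m ≤ 0 := by
  by_contra hm
  push_neg at hm
  have h0 : deriv g a = 0 := hmax.deriv_eq_zero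
  have hs : Tendsto (slope (deriv g) a) (nhdsWithin a {a}ᶜ) (nhds m) :=
    hasDerivAt_iff_tendsto_slope.1 hg2
  have h1 : ∀ᶠ t in nhdsWithin a (Ioi a), 0 < slope (deriv g) a t :=
    (hs.eventually (eventually_gt_nhds hm)).filter_mono
      (nhdsWithin_mono a (fun t ht => ne_of_gt ht))
  have h2 : ∀ᶠ t in nhdsWithin a (Ioi a), 0 < deriv g t := by
    filter_upwards [h1, self_mem_nhdsWithin] with t ht ht'
    have heq : slope (deriv g) a t = (deriv g t) / (t - a) := by
      rw [slope_def_field, h0]; ring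
    rw [heq] at ht
    have hta : 0 < t - a := sub_pos.2 ht'
    have := mul_pos ht hta
    rwa [div_mul_cancel₀ _ (ne_of_gt hta)] at this
  have h3 : ∀ᶠ t in nhdsWithin a (Ioi a),
      0 < deriv g t ∧ DifferentiableAt ℝ g t ∧ g t ≤ g a := by
    filter_upwards [h2, (hg.and hmax).filter_mono nhdsWithin_le_nhds] with t ht hr
    exact ⟨ht, hr.1, hr.2⟩
  obtain ⟨b, hb, hball⟩ := (nhdsGT_basis a).eventually_iff.1 h3
  set t₀ := (a + b) / 2 with ht₀def
  have ht₀ : t₀ ∈ Ioo a b := ⟨by simp [ht₀def]; linarith, by simp [ht₀def]; linarith⟩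
  have hmono : StrictMonoOn g (Icc a t₀) := by
    apply strictMonoOn_of_deriv_pos (convex_Icc a t₀)
    · intro t ht
      rcases eq_or_lt_of_le ht.1 with h | h
      · subst h
        exact (hg.self_of_nhds).continuousAt.continuousWithinAt
      · exact ((hball ⟨h, lt_of_le_of_lt ht.2 ht₀.2⟩).2.1).continuousAt.continuousWithinAt
    · intro t ht
      rw [interior_Icc] at ht
      exact (hball ⟨ht.1, lt_trans ht.2 ht₀.2⟩).1
  have hlt : g a < g t₀ := hmono (left_mem_Icc.2 (le_of_lt ht₀.1)) (right_mem_Icc.2 (le_of_lt ht₀.1)) ht₀.1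
  exact absurd (hball ht₀).2.2 (not_le.2 hlt)



lemma polyD1 (CC c1 c2 c3 c4 a4 a t : ℝ) :
    HasDerivAt (fun s : ℝ => CC + c1*(s^4+a4) + c2*(s^2+a) + c3*(s^2+a)^2 + c4*(s^2+a)^3)
      (c1*(4*t^3) + c2*(2*t) + c3*(2*(t^2+a)*(2*t)) + c4*(3*(t^2+a)^2*(2*t))) t := by
  have hsq : HasDerivAt (fun s : ℝ => s^2 + a) (2*t) t := by
    simpa using (hasDerivAt_pow 2 t).add_const a
  have h4 : HasDerivAt (fun s : ℝ => s^4 + a4) (4*t^3) t := by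
    simpa using (hasDerivAt_pow 4 t).add_const a4
  have := ((((hasDerivAt_const t CC).add (h4.const_mul c1)).add (hsq.const_mul c2)).add
      ((hsq.pow 2).const_mul c3)).add ((hsq.pow 3).const_mul c4)
  refine this.congr_deriv ?_
  push_cast
  ring

lemma polyD2 (c1 c2 c3 c4 a t : ℝ) :
    HasDerivAt (fun s : ℝ => c1*(4*s^3) + c2*(2*s) + c3*(2*(s^2+a)*(2*s)) + c4*(3*(s^2+a)^2*(2*s)))
      (c1*(12*t^2) + 2*c2 + c3*(4*(t^2+a)+8*t^2) + c4*(6*(t^2+a)^2+24*t^2*(t^2+a))) t := by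
  have hsq : HasDerivAt (fun s : ℝ => s^2 + a) (2*t) t := by
    simpa using (hasDerivAt_pow 2 t).add_const a
  have hid : HasDerivAt (fun s : ℝ => s) 1 t := hasDerivAt_id t
  have h3 : HasDerivAt (fun s : ℝ => s^3) (3*t^2) t := by simpa using hasDerivAt_pow 3 t
  have hterm3 : HasDerivAt (fun s : ℝ => 2*(s^2+a)*(2*s)) (2*(2*t)*(2*t) + 2*(t^2+a)*2) t := by
    exact ((hsq.const_mul 2).mul (hid.const_mul 2)).congr_deriv (by ring)
  have hterm4 : HasDerivAt (fun s : ℝ => 3*(s^2+a)^2*(2*s))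
      (3*(2*(t^2+a)*(2*t))*(2*t) + 3*(t^2+a)^2*2) t := by
    have := (((hsq.pow 2).const_mul 3).mul (hid.const_mul 2))
    refine this.congr_deriv ?_
    push_cast [Pi.pow_apply]; ring
  have := (((h3.const_mul c1).const_mul 4).congr_of_eventuallyEq (.of_eq (by funext s; ring))
      : HasDerivAt (fun s : ℝ => c1*(4*s^3)) (4*(c1*(3*t^2))) t)
  have hall := ((this.add ((hid.const_mul 2).const_mul c2)).add (hterm3.const_mul c3)).add
      (hterm4.const_mul c4)
  refine hall.congr_deriv ?_
  ring

lemma sect_facts {U : ℝ → ℝ} {s : Set ℝ} (hs : IsOpen s) {x : ℝ} (hx : x ∈ s)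
    (hU : ContDiffOn ℝ (⊤ : ℕ∞) U s) (σ CC c1 c2 c3 c4 a4 a : ℝ) :
    (∀ᶠ t in nhds x, DifferentiableAt ℝ
      (fun t => σ * U t + (CC + c1*(t^4+a4) + c2*(t^2+a) + c3*(t^2+a)^2 + c4*(t^2+a)^3)) t) ∧
    HasDerivAt (deriv (fun t => σ * U t + (CC + c1*(t^4+a4) + c2*(t^2+a) + c3*(t^2+a)^2 + c4*(t^2+a)^3)))
      (σ * deriv (deriv U) x +
        (c1*(12*x^2) + 2*c2 + c3*(4*(x^2+a)+8*x^2) + c4*(6*(x^2+a)^2+24*x^2*(x^2+a)))) x := by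
  have hsnb : s ∈ nhds x := hs.mem_nhds hx
  have hUd : ∀ t ∈ s, DifferentiableAt ℝ U t := fun t ht =>
    (hU.differentiableOn (by norm_num)).differentiableAt (hs.mem_nhds ht)
  have hU1 : ContDiffOn ℝ (⊤ : ℕ∞) (deriv U) s := hU.deriv_of_isOpen hs (by norm_num)
  have hU'd : DifferentiableAt ℝ (deriv U) x :=
    (hU1.differentiableOn (by norm_num)).differentiableAt hsnb
  have hgd : ∀ t ∈ s, HasDerivAt
      (fun t => σ * U t + (CC + c1*(t^4+a4) + c2*(t^2+a) + c3*(t^2+a)^2 + c4*(t^2+a)^3))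
      (σ * deriv U t + (c1*(4*t^3) + c2*(2*t) + c3*(2*(t^2+a)*(2*t)) + c4*(3*(t^2+a)^2*(2*t)))) t := by
    intro t ht
    exact (((hUd t ht).hasDerivAt.const_mul σ).add (polyD1 CC c1 c2 c3 c4 a4 a t))
  constructor
  · filter_upwards [hsnb] with t ht
    exact (hgd t ht).differentiableAt
  · have heq : deriv (fun t => σ * U t + (CC + c1*(t^4+a4) + c2*(t^2+a) + c3*(t^2+a)^2 + c4*(t^2+a)^3))
        =ᶠ[nhds x] (fun t => σ * deriv U t +
          (c1*(4*t^3) + c2*(2*t) + c3*(2*(t^2+a)*(2*t)) + c4*(3*(t^2+a)^2*(2*t)))) := by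
      filter_upwards [hsnb] with t ht
      exact (hgd t ht).deriv
    have h2 : HasDerivAt (fun t => σ * deriv U t +
        (c1*(4*t^3) + c2*(2*t) + c3*(2*(t^2+a)*(2*t)) + c4*(3*(t^2+a)^2*(2*t))))
        (σ * deriv (deriv U) x +
          (c1*(12*x^2) + 2*c2 + c3*(4*(x^2+a)+8*x^2) + c4*(6*(x^2+a)^2+24*x^2*(x^2+a)))) x :=
      (hU'd.hasDerivAt.const_mul σ).add (polyD2 c1 c2 c3 c4 a x)
    exact h2.congr_of_eventuallyEq heq

lemma core (v : ℝ → ℝ → ℝ) (ρ : ℝ) (hρ : 0 < ρ)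
    (hcont : ContinuousOn (fun p : ℝ × ℝ => v p.1 p.2) {p : ℝ × ℝ | p.1^2 + p.2^2 ≤ ρ^2})
    (hx : ∀ x y : ℝ, x^2+y^2 < ρ^2 → (∀ᶠ t in nhds x, DifferentiableAt ℝ (fun t => v t y) t))
    (hy : ∀ x y : ℝ, x^2+y^2 < ρ^2 → (∀ᶠ t in nhds y, DifferentiableAt ℝ (fun t => v x t) t))
    (hlap : ∀ x y : ℝ, x^2+y^2 < ρ^2 → ∃ m₁ m₂ : ℝ,
      HasDerivAt (deriv (fun t => v t y)) m₁ x ∧ HasDerivAt (deriv (fun t => v x t)) m₂ y ∧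
      0 < m₁ + m₂) :
    ∃ x y : ℝ, x^2+y^2 = ρ^2 ∧ v 0 0 ≤ v x y := by
  set D : Set (ℝ × ℝ) := {p : ℝ × ℝ | p.1^2 + p.2^2 ≤ ρ^2} with hD
  have hDclosed : IsClosed D :=
    isClosed_Iic.preimage (by fun_prop : Continuous fun p : ℝ × ℝ => p.1^2 + p.2^2)
  have hDsub : D ⊆ Metric.closedBall 0 ρ := by
    intro p hp
    simp only [hD, mem_setOf_eq] at hp
    have h1 : |p.1| ≤ ρ := by nlinarith [sq_abs p.1, sq_abs p.2, abs_nonneg p.1, abs_nonneg p.2, sq_nonneg p.2]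
    have h2 : |p.2| ≤ ρ := by nlinarith [sq_abs p.1, sq_abs p.2, abs_nonneg p.1, abs_nonneg p.2, sq_nonneg p.1]
    simp only [Metric.mem_closedBall, Prod.dist_eq, dist_zero_right, Real.norm_eq_abs]
    exact max_le h1 h2
  have hDcmp : IsCompact D := (isCompact_closedBall _ _).of_isClosed_subset hDclosed hDsub
  have hDne : D.Nonempty := ⟨(0, 0), by simp [hD]; positivity⟩
  obtain ⟨p₀, hp₀D, hp₀max⟩ := hDcmp.exists_isMaxOn hDne hcont
  have h00 : ((0 : ℝ), (0 : ℝ)) ∈ D := by simp [hD]; positivity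
  have hp₀le : p₀.1^2 + p₀.2^2 ≤ ρ^2 := hp₀D
  rcases eq_or_lt_of_le hp₀le with heq | hlt
  · exact ⟨p₀.1, p₀.2, heq, hp₀max h00⟩
  · exfalso
    have hOopen : IsOpen {p : ℝ × ℝ | p.1^2 + p.2^2 < ρ^2} :=
      isOpen_Iio.preimage (by fun_prop : Continuous fun p : ℝ × ℝ => p.1^2 + p.2^2)
    have hDnbhd : D ∈ nhds p₀ :=
      Filter.mem_of_superset (hOopen.mem_nhds hlt) (fun p hp => show p.1^2 + p.2^2 ≤ ρ^2 from le_of_lt hp)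
    have hloc : IsLocalMax (fun p : ℝ × ℝ => v p.1 p.2) p₀ := hp₀max.isLocalMax hDnbhd
    have hlocx : IsLocalMax (fun t => v t p₀.2) p₀.1 := by
      have hc : ContinuousAt (fun t : ℝ => (t, p₀.2)) p₀.1 := by fun_prop
      have := hc.tendsto.eventually hloc
      exact this
    have hlocy : IsLocalMax (fun t => v p₀.1 t) p₀.2 := by
      have hc : ContinuousAt (fun t : ℝ => (p₀.1, t)) p₀.2 := by fun_prop
      have := hc.tendsto.eventually hloc
      exact this
    obtain ⟨m₁, m₂, hm₁, hm₂, hpos⟩ := hlap p₀.1 p₀.2 hlt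
    have h1 : m₁ ≤ 0 := sdt hlocx (hx p₀.1 p₀.2 hlt) hm₁
    have h2 : m₂ ≤ 0 := sdt hlocy (hy p₀.1 p₀.2 hlt) hm₂
    linarith

lemma distP {x y ρ δ : ℝ} (h : x^2+y^2 ≤ ρ^2) (hρ : 0 < ρ) (hδ : ρ < δ) :
    dist ((x,y) : ℝ × ℝ) 0 < δ := by
  have h1 : |x| ≤ ρ := by nlinarith [sq_abs x, abs_nonneg x, sq_nonneg y]
  have h2 : |y| ≤ ρ := by nlinarith [sq_abs y, abs_nonneg y, sq_nonneg x]
  rw [Prod.dist_eq]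
  simp only [Prod.fst_zero, Prod.snd_zero, dist_zero_right, Real.norm_eq_abs]
  exact lt_of_le_of_lt (max_le h1 h2) hδ


set_option maxHeartbeats 1000000 in
lemma exists_boundary (u : ℝ → ℝ → ℝ)
    (hu : ContDiffOn ℝ (⊤ : ℕ∞) (fun p : ℝ × ℝ => u p.1 p.2) B1)
    (σ A B M ρ : ℝ) (hρ : 0 < ρ) (hρ1 : ρ < 1)
    (hpos : ∀ x y : ℝ, x^2+y^2 < ρ^2 → 0 < σ * (pd u 2 0 x y + pd u 0 2 x y) +
      (12*σ*(x^2+y^2) + 4*A + 16*B*(x^2+y^2) + 36*M*(x^2+y^2)^2)) :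
    ∃ x y : ℝ, x^2+y^2 = ρ^2 ∧
      0 ≤ σ * (u x y - u 0 0) + σ*(x^4+y^4) + A*ρ^2 + B*ρ^4 + M*ρ^6 := by
  set V : ℝ → ℝ → ℝ := fun x y =>
    σ * u x y + (0 + σ*(x^4+y^4) + A*(x^2+y^2) + B*(x^2+y^2)^2 + M*(x^2+y^2)^3) with hV
  -- D ⊆ B1
  have hDB1 : {p : ℝ × ℝ | p.1^2 + p.2^2 ≤ ρ^2} ⊆ B1 := by
    intro p hp
    simp only [mem_setOf_eq] at hp
    have h1 : |p.1| ≤ ρ := by nlinarith [sq_abs p.1, abs_nonneg p.1, sq_nonneg p.2]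
    have h2 : |p.2| ≤ ρ := by nlinarith [sq_abs p.2, abs_nonneg p.2, sq_nonneg p.1]
    simp only [B1, Metric.mem_ball, Prod.dist_eq, dist_zero_right, Real.norm_eq_abs]
    exact lt_of_le_of_lt (max_le h1 h2) hρ1
  have hB1open : IsOpen B1 := Metric.isOpen_ball
  -- section smoothness
  have hsectx : ∀ y : ℝ, ContDiffOn ℝ (⊤ : ℕ∞) (fun t => u t y) {t : ℝ | (t, y) ∈ B1} := by
    intro y
    have : ContDiffOn ℝ (⊤ : ℕ∞) ((fun p : ℝ × ℝ => u p.1 p.2) ∘ (fun t : ℝ => (t, y)))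
        {t : ℝ | (t, y) ∈ B1} :=
      hu.comp ((contDiff_id.prodMk contDiff_const).contDiffOn) (fun t ht => ht)
    exact this
  have hsecty : ∀ x : ℝ, ContDiffOn ℝ (⊤ : ℕ∞) (fun t => u x t) {t : ℝ | (x, t) ∈ B1} := by
    intro x
    have : ContDiffOn ℝ (⊤ : ℕ∞) ((fun p : ℝ × ℝ => u p.1 p.2) ∘ (fun t : ℝ => (x, t)))
        {t : ℝ | (x, t) ∈ B1} :=
      hu.comp ((contDiff_const.prodMk contDiff_id).contDiffOn) (fun t ht => ht)
    exact this
  have hopenx : ∀ y : ℝ, IsOpen {t : ℝ | (t, y) ∈ B1} := fun y =>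
    hB1open.preimage (by fun_prop : Continuous fun t : ℝ => (t, y))
  have hopeny : ∀ x : ℝ, IsOpen {t : ℝ | (x, t) ∈ B1} := fun x =>
    hB1open.preimage (by fun_prop : Continuous fun t : ℝ => (x, t))
  -- y-section rewriting
  have hysect : ∀ x : ℝ, (fun t => V x t) = (fun t =>
      σ * u x t + (0 + σ*(t^4+x^4) + A*(t^2+x^2) + B*(t^2+x^2)^2 + M*(t^2+x^2)^3)) := by
    intro x; funext t; simp only [hV]; ring
  have hmem : ∀ x y : ℝ, x^2+y^2 < ρ^2 → (x, y) ∈ B1 := fun x y h =>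
    hDB1 (le_of_lt h)
  -- apply core
  have hcore := core V ρ hρ ?_ ?_ ?_ ?_
  · obtain ⟨x, y, hxy, hle⟩ := hcore
    refine ⟨x, y, hxy, ?_⟩
    simp only [hV] at hle
    rw [hxy] at hle
    have r4 : (ρ^2)^2 = ρ^4 := by ring
    have r6 : (ρ^2)^3 = ρ^6 := by ring
    rw [r4, r6] at hle
    norm_num at hle
    linarith
  · -- continuity
    apply ContinuousOn.add
    · exact continuousOn_const.mul (hu.continuousOn.mono hDB1)
    · exact (Continuous.continuousOn (by fun_prop))
  · -- x-section differentiability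
    intro x y h
    exact (sect_facts (hopenx y) (hmem x y h) (hsectx y) σ 0 σ A B M (y^4) (y^2)).1
  · -- y-section differentiability
    intro x y h
    rw [hysect x]
    exact (sect_facts (hopeny x) (hmem x y h) (hsecty x) σ 0 σ A B M (x^4) (x^2)).1
  · -- Laplacian positivity
    intro x y h
    have H1 := (sect_facts (hopenx y) (hmem x y h) (hsectx y) σ 0 σ A B M (y^4) (y^2)).2
    have H2 := (sect_facts (hopeny x) (hmem x y h) (hsecty x) σ 0 σ A B M (x^4) (x^2)).2
    rw [← hysect x] at H2
    have hp := hpos x y h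
    rw [pd20, pd02] at hp
    refine ⟨_, _, H1, H2, ?_⟩
    calc (0:ℝ) < σ * (deriv (deriv fun t => u t y) x + deriv (deriv fun t => u x t) y) +
        (12*σ*(x^2+y^2) + 4*A + 16*B*(x^2+y^2) + 36*M*(x^2+y^2)^2) := hp
      _ = _ := by ring

set_option maxHeartbeats 1000000 in
/-- there is no solution `u` of `-Δu = f(u)` in `B₁` with
`u(x,y) = u(0,0) - x⁴ - y⁴ + o((x²+y²)²)` near the origin. -/
theorem no_quartic_max_profile
    (u : ℝ → ℝ → ℝ) (f : ℝ → ℝ)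
    (hu : ContDiffOn ℝ (⊤ : ℕ∞) (fun p : ℝ × ℝ => u p.1 p.2) B1)
    (hf : ContDiff ℝ (⊤ : ℕ∞) f)
    (hpde : ∀ x y : ℝ, (x, y) ∈ B1 → -(pd u 2 0 x y + pd u 0 2 x y) = f (u x y)) :
    ¬ Filter.Tendsto
        (fun p : ℝ × ℝ => (u p.1 p.2 - u 0 0 + p.1 ^ 4 + p.2 ^ 4) / (p.1 ^ 2 + p.2 ^ 2) ^ 2)
        (nhdsWithin (0 : ℝ × ℝ) {(0 : ℝ × ℝ)}ᶜ) (nhds 0) := by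
  intro hT
  set c : ℝ := f (u 0 0) with hc
  -- little-o bound on h
  have hHB : ∀ η : ℝ, 0 < η → ∀ᶠ p : ℝ × ℝ in nhds 0,
      |u p.1 p.2 - u 0 0 + p.1^4 + p.2^4| ≤ η * (p.1^2+p.2^2)^2 := by
    intro η hη
    have h1 := Metric.tendsto_nhds.mp hT η hη
    rw [eventually_nhdsWithin_iff] at h1
    filter_upwards [h1] with p hp
    by_cases hp0 : p = 0
    · subst hp0; norm_num [Prod.fst_zero, Prod.snd_zero]
    · have hmem : p ∈ ({(0 : ℝ × ℝ)}ᶜ : Set (ℝ × ℝ)) := by simpa using hp0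
      have hd := hp hmem
      rw [Real.dist_eq, sub_zero] at hd
      have hr : (0:ℝ) < (p.1^2 + p.2^2) := by
        have hne : p.1 ≠ 0 ∨ p.2 ≠ 0 := by
          by_contra hcon
          push_neg at hcon
          exact hp0 (Prod.ext_iff.mpr ⟨hcon.1, hcon.2⟩)
        rcases hne with h | h
        · have h1 : 0 < p.1^2 := lt_of_le_of_ne (sq_nonneg _) (Ne.symm (pow_ne_zero 2 h))
          nlinarith [sq_nonneg p.2]
        · have h1 : 0 < p.2^2 := lt_of_le_of_ne (sq_nonneg _) (Ne.symm (pow_ne_zero 2 h))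
          nlinarith [sq_nonneg p.1]
      have hr4 : (0:ℝ) < (p.1^2 + p.2^2)^2 := by positivity
      rw [abs_div, abs_of_pos hr4] at hd
      have := (div_lt_iff₀ hr4).mp hd
      linarith
  -- continuity of u at 0
  have h0B1 : (0 : ℝ × ℝ) ∈ B1 := by simp [B1]
  have hB1open : IsOpen B1 := Metric.isOpen_ball
  have hcu : ContinuousAt (fun p : ℝ × ℝ => u p.1 p.2) 0 :=
    (hu.continuousOn.continuousAt (hB1open.mem_nhds h0B1))
  -- Lipschitz bound for f near u 0 0
  obtain ⟨L, t, ht, hlip⟩ := (hf.contDiffAt.of_le (by simp) :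
    ContDiffAt ℝ 1 f (u 0 0)).exists_lipschitzOnWith
  have hut : ∀ᶠ p : ℝ × ℝ in nhds 0, u p.1 p.2 ∈ t := hcu ht
  set Kc : ℝ := 2 * (L : ℝ) with hKc
  have hKc0 : 0 ≤ Kc := by positivity
  have hE : ∀ᶠ p : ℝ × ℝ in nhds 0, |f (u p.1 p.2) - c| ≤ Kc * (p.1^2+p.2^2)^2 := by
    filter_upwards [hut, hHB 1 one_pos] with p h1 h2
    have hd : dist (f (u p.1 p.2)) (f (u 0 0)) ≤ (L:ℝ) * dist (u p.1 p.2) (u 0 0) :=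
      hlip.dist_le_mul _ h1 _ (mem_of_mem_nhds ht)
    rw [Real.dist_eq, Real.dist_eq] at hd
    have hq : |u p.1 p.2 - u 0 0| ≤ 2 * (p.1^2+p.2^2)^2 := by
      have e1 : u p.1 p.2 - u 0 0 =
          (u p.1 p.2 - u 0 0 + p.1^4 + p.2^4) - (p.1^4 + p.2^4) := by ring
      rw [e1]
      refine le_trans (abs_sub _ _) ?_
      have e2 : |p.1^4 + p.2^4| = p.1^4 + p.2^4 := abs_of_nonneg (by positivity)
      rw [e2]
      nlinarith [sq_nonneg (p.1*p.2), sq_nonneg p.1, sq_nonneg p.2, h2]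
    calc |f (u p.1 p.2) - c| ≤ (L:ℝ) * |u p.1 p.2 - u 0 0| := hd
      _ ≤ (L:ℝ) * (2 * (p.1^2+p.2^2)^2) :=
        mul_le_mul_of_nonneg_left hq (by positivity)
      _ = Kc * (p.1^2+p.2^2)^2 := by rw [hKc]; ring
  obtain ⟨δ1, hδ1, hE'⟩ := Metric.eventually_nhds_iff.mp hE
  set Mo : ℝ := Kc/36 + 1 with hMo
  have hMo1 : 1 ≤ Mo := by rw [hMo]; linarith
  -- key estimate
  have key : ∀ η : ℝ, 0 < η → ∃ ρ₀ : ℝ, 0 < ρ₀ ∧ ∀ ρ : ℝ, 0 < ρ → ρ ≤ ρ₀ →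
      (-(c/4)*ρ^2 ≤ η*ρ^4 - (3/4)*ρ^4 + (Mo+1)*ρ^6) ∧
      ((c/4)*ρ^2 ≤ η*ρ^4 + (3/4)*ρ^4 + (Mo+1)*ρ^6) := by
    intro η hη
    obtain ⟨δ2, hδ2, hH'⟩ := Metric.eventually_nhds_iff.mp (hHB η hη)
    refine ⟨min (min (δ1/2) (δ2/2)) (1/2), by positivity, ?_⟩
    intro ρ hρ hρ₀
    have hρδ1 : ρ < δ1 := by
      have := le_trans hρ₀ (le_trans (min_le_left _ _) (min_le_left _ _)); linarith
    have hρδ2 : ρ < δ2 := by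
      have := le_trans hρ₀ (le_trans (min_le_left _ _) (min_le_right _ _)); linarith
    have hρ1 : ρ < 1 := by
      have := le_trans hρ₀ (min_le_right _ _); linarith
    -- positivity hypothesis, both signs
    have hposgen : ∀ (σ A : ℝ) (B : ℝ), (σ = 1 ∨ σ = -1) → ∀ x y : ℝ, x^2+y^2 < ρ^2 →
        |f (u x y) - c| ≤ Kc * (x^2+y^2)^2 →
        pd u 2 0 x y + pd u 0 2 x y = -f (u x y) → True := fun _ _ _ _ _ _ _ _ _ => trivial
    have mkpos : ∀ x y : ℝ, x^2+y^2 < ρ^2 →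
        (pd u 2 0 x y + pd u 0 2 x y = -f (u x y)) ∧ |f (u x y) - c| ≤ Kc * (x^2+y^2)^2 := by
      intro x y hxy
      have hB : ((x,y) : ℝ × ℝ) ∈ B1 := by
        simp only [B1, Metric.mem_ball]
        exact distP (le_of_lt hxy) hρ hρ1
      have h1 := hpde x y hB
      have h2 := hE' (show dist ((x,y) : ℝ × ℝ) 0 < δ1 from distP (le_of_lt hxy) hρ hρδ1)
      exact ⟨by linarith, h2⟩
    -- σ = 1
    have K1 := exists_boundary u hu 1 (c/4 + ρ^4) (-(3/4)) Mo ρ hρ hρ1 ?_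
    -- σ = -1
    have K2 := exists_boundary u hu (-1) (-(c/4) + ρ^4) (3/4) Mo ρ hρ hρ1 ?_
    · obtain ⟨x1, y1, hc1, hi1⟩ := K1
      obtain ⟨x2, y2, hc2, hi2⟩ := K2
      have hh1 : |u x1 y1 - u 0 0 + x1^4 + y1^4| ≤ η * ρ^4 := by
        have := hH' (show dist ((x1,y1) : ℝ × ℝ) 0 < δ2 from distP (le_of_eq hc1) hρ hρδ2)
        calc |u x1 y1 - u 0 0 + x1^4 + y1^4| ≤ η * (x1^2+y1^2)^2 := this
          _ = η * ρ^4 := by rw [hc1]; ring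
      have hh2 : |u x2 y2 - u 0 0 + x2^4 + y2^4| ≤ η * ρ^4 := by
        have := hH' (show dist ((x2,y2) : ℝ × ℝ) 0 < δ2 from distP (le_of_eq hc2) hρ hρδ2)
        calc |u x2 y2 - u 0 0 + x2^4 + y2^4| ≤ η * (x2^2+y2^2)^2 := this
          _ = η * ρ^4 := by rw [hc2]; ring
      constructor
      · have ha := abs_le.mp hh1
        linarith [hi1, ha.1, ha.2]
      · have ha := abs_le.mp hh2
        linarith [hi2, ha.1, ha.2]
    all_goals {
      intro x y hxy
      obtain ⟨hpd, he⟩ := mkpos x y hxy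
      rw [hpd, hMo]
      have ha := abs_le.mp he
      linarith [sq_nonneg (x^2+y^2), pow_pos hρ 4, ha.1, ha.2, hKc0] }
  -- step 1 : c = 0
  have hc0 : c = 0 := by
    obtain ⟨ρ₀, hρ₀, hK⟩ := key 1 one_pos
    have hev : ∀ᶠ ρ in nhdsWithin (0:ℝ) (Ioi 0), |c/4| ≤ (1+3/4)*ρ^2 + (Mo+1)*ρ^4 := by
      filter_upwards [Ioc_mem_nhdsGT_of_mem (Set.left_mem_Ico.mpr hρ₀)] with ρ hρmem
      obtain ⟨h1, h2⟩ := hK ρ hρmem.1 hρmem.2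
      have hρ2 : (0:ℝ) < ρ^2 := pow_pos hρmem.1 2
      have hρ4 : (0:ℝ) < ρ^4 := pow_pos hρmem.1 4
      have e1 : -(c/4) ≤ (1+3/4)*ρ^2 + (Mo+1)*ρ^4 := by
        apply le_of_mul_le_mul_right _ hρ2
        calc -(c/4) * ρ^2 ≤ 1*ρ^4 - (3/4)*ρ^4 + (Mo+1)*ρ^6 := h1
          _ ≤ ((1+3/4)*ρ^2 + (Mo+1)*ρ^4) * ρ^2 := by linarith [hρ4]
      have e2 : c/4 ≤ (1+3/4)*ρ^2 + (Mo+1)*ρ^4 := by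
        apply le_of_mul_le_mul_right _ hρ2
        calc c/4 * ρ^2 ≤ 1*ρ^4 + (3/4)*ρ^4 + (Mo+1)*ρ^6 := h2
          _ ≤ ((1+3/4)*ρ^2 + (Mo+1)*ρ^4) * ρ^2 := by linarith [hρ4]
      rw [abs_le]
      exact ⟨by linarith, e2⟩
    have hten : Tendsto (fun ρ : ℝ => (1+3/4)*ρ^2 + (Mo+1)*ρ^4) (nhdsWithin (0:ℝ) (Ioi 0))
        (nhds 0) := by
      have : Continuous (fun ρ : ℝ => (1+3/4)*ρ^2 + (Mo+1)*ρ^4) := by fun_prop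
      have h2 : Tendsto (fun ρ : ℝ => (1+3/4)*ρ^2 + (Mo+1)*ρ^4) (nhdsWithin (0:ℝ) (Ioi 0))
          (nhds ((1+3/4)*(0:ℝ)^2 + (Mo+1)*(0:ℝ)^4)) :=
        (this.tendsto 0).mono_left nhdsWithin_le_nhds
      simpa using h2
    have := ge_of_tendsto hten hev
    have : |c/4| ≤ 0 := this
    have : c/4 = 0 := abs_nonpos_iff.mp this
    linarith
  -- final contradiction
  obtain ⟨ρ₀, hρ₀, hK⟩ := key (1/4) (by norm_num)
  set ρ : ℝ := min ρ₀ (1/(2*(Mo+1))) with hρdef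
  have hMopos : (0:ℝ) < Mo + 1 := by linarith
  have hρpos : 0 < ρ := by
    apply lt_min hρ₀
    positivity
  obtain ⟨h1, h2⟩ := hK ρ hρpos (min_le_left _ _)
  rw [hc0] at h1
  have hρle : ρ ≤ 1/(2*(Mo+1)) := min_le_right _ _
  have hfin : (Mo+1)*ρ^2 ≤ 1/4 := by
    have h3 : ρ^2 ≤ (1/(2*(Mo+1)))^2 := by
      apply pow_le_pow_left₀ (le_of_lt hρpos) hρle
    calc (Mo+1)*ρ^2 ≤ (Mo+1)*(1/(2*(Mo+1)))^2 :=
        mul_le_mul_of_nonneg_left h3 (le_of_lt hMopos)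
      _ = 1/(4*(Mo+1)) := by field_simp; ring
      _ ≤ 1/4 := by
        rw [div_le_div_iff₀ (by linarith) (by norm_num)]
        linarith
  have hp4 : (0:ℝ) < ρ^4 := pow_pos hρpos 4
  have hmul : (Mo+1)*ρ^2*ρ^4 ≤ (1/4)*ρ^4 := mul_le_mul_of_nonneg_right hfin (le_of_lt hp4)
  linarith [h1, hmul, hp4]
end

section
/- Let u be a solution of -Δu = f(u) in B₁ and let n ≥ 3 be an integer such that all partial derivatives of u of every order m with 1 ≤ m ≤ n-1 vanish at (0,0). Then the n-th order derivatives of u at the origin satisfy: ∂ⁿu/∂x^{n-2h}∂y^{2h}(0,0) = (-1)^h · ∂ⁿu/∂xⁿ(0,0) for every integer h with 0 ≤ 2h ≤ n, and ∂ⁿu/∂x^{n-2h-1}∂y^{2h+1}(0,0) = (-1)^h · ∂ⁿu/∂x^{n-1}∂y(0,0) for every integer h with 0 ≤ 2h+1 ≤ n. -/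
open Filter Metric Set

namespace Alt

noncomputable def Dp (v : ℝ × ℝ) (G : ℝ × ℝ → ℝ) : ℝ × ℝ → ℝ := fun p => fderiv ℝ G p v
noncomputable def DD (i j : ℕ) (G : ℝ × ℝ → ℝ) : ℝ × ℝ → ℝ := (Dp (1,0))^[i] ((Dp (0,1))^[j] G)
abbrev SM : WithTop ℕ∞ := ((⊤ : ℕ∞) : WithTop ℕ∞)

lemma SM_add_one : SM + 1 ≤ SM := by
  simp [SM]

lemma isOpen_B1 : IsOpen B1 := isOpen_ball
lemma zero_mem_B1 : (0 : ℝ × ℝ) ∈ B1 := mem_ball_self one_pos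

lemma diffAt {G : ℝ × ℝ → ℝ} (hG : ContDiffOn ℝ SM G B1) {p : ℝ × ℝ} (hp : p ∈ B1) :
    DifferentiableAt ℝ G p :=
  ((hG.contDiffAt (isOpen_B1.mem_nhds hp)).differentiableAt (by simp [SM]))

lemma smooth_Dp {G : ℝ × ℝ → ℝ} (hG : ContDiffOn ℝ SM G B1) (v : ℝ × ℝ) :
    ContDiffOn ℝ SM (Dp v G) B1 := by
  have h1 : ContDiffOn ℝ SM (fderivWithin ℝ G B1) B1 :=
    hG.fderivWithin isOpen_B1.uniqueDiffOn SM_add_one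
  have h2 : ContDiffOn ℝ SM (fun p => fderivWithin ℝ G B1 p v) B1 :=
    h1.clm_apply contDiffOn_const
  exact h2.congr (fun p hp => by
    simp only [Dp, fderivWithin_of_isOpen isOpen_B1 hp])

lemma smooth_Dp_iter {G : ℝ × ℝ → ℝ} (hG : ContDiffOn ℝ SM G B1) (v : ℝ × ℝ) (k : ℕ) :
    ContDiffOn ℝ SM ((Dp v)^[k] G) B1 := by
  induction k generalizing G with
  | zero => exact hG
  | succ k ih => rw [Function.iterate_succ_apply]; exact ih (smooth_Dp hG v)

lemma smooth_DD {G : ℝ × ℝ → ℝ} (hG : ContDiffOn ℝ SM G B1) (i j : ℕ) :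
    ContDiffOn ℝ SM (DD i j G) B1 :=
  smooth_Dp_iter (smooth_Dp_iter hG _ j) _ i

lemma eqOn_Dp {A B : ℝ × ℝ → ℝ} (h : EqOn A B B1) (v : ℝ × ℝ) :
    EqOn (Dp v A) (Dp v B) B1 := by
  intro p hp
  have : A =ᶠ[nhds p] B := Filter.eventuallyEq_of_mem (isOpen_B1.mem_nhds hp) h
  simp only [Dp, this.fderiv_eq]

lemma eqOn_Dp_iter {A B : ℝ × ℝ → ℝ} (h : EqOn A B B1) (v : ℝ × ℝ) (k : ℕ) :
    EqOn ((Dp v)^[k] A) ((Dp v)^[k] B) B1 := by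
  induction k generalizing A B with
  | zero => exact h
  | succ k ih => rw [Function.iterate_succ_apply, Function.iterate_succ_apply]
                 exact ih (eqOn_Dp h v)

lemma eqOn_DD {A B : ℝ × ℝ → ℝ} (h : EqOn A B B1) (i j : ℕ) :
    EqOn (DD i j A) (DD i j B) B1 :=
  eqOn_Dp_iter (eqOn_Dp_iter h _ j) _ i


lemma Dp_Dp {G : ℝ × ℝ → ℝ} (hG : ContDiffOn ℝ SM G B1) {p : ℝ × ℝ} (hp : p ∈ B1)
    (v w : ℝ × ℝ) : Dp w (Dp v G) p = fderiv ℝ (fderiv ℝ G) p w v := by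
  have hc : DifferentiableAt ℝ (fderiv ℝ G) p := by
    have := (hG.contDiffAt (isOpen_B1.mem_nhds hp)).fderiv_right (m := SM) SM_add_one
    exact this.differentiableAt (by simp [SM])
  have hu : DifferentiableAt ℝ (fun _ : ℝ × ℝ => v) p := differentiableAt_const v
  show fderiv ℝ (fun q => fderiv ℝ G q v) p w = _
  rw [fderiv_clm_apply hc hu]
  simp

lemma Dp_swap {G : ℝ × ℝ → ℝ} (hG : ContDiffOn ℝ SM G B1) {p : ℝ × ℝ} (hp : p ∈ B1)
    (v w : ℝ × ℝ) : Dp w (Dp v G) p = Dp v (Dp w G) p := by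
  rw [Dp_Dp hG hp, Dp_Dp hG hp]
  have hev : ∀ᶠ y in nhds p, HasFDerivAt G (fderiv ℝ G y) y := by
    filter_upwards [isOpen_B1.mem_nhds hp] with y hy
    exact (diffAt hG hy).hasFDerivAt
  have hc : DifferentiableAt ℝ (fderiv ℝ G) p := by
    have := (hG.contDiffAt (isOpen_B1.mem_nhds hp)).fderiv_right (m := SM) SM_add_one
    exact this.differentiableAt (by simp [SM])
  exact second_derivative_symmetric_of_eventually hev hc.hasFDerivAt w v

-- chunk 2
lemma Dp_comm_iter {G : ℝ × ℝ → ℝ} (hG : ContDiffOn ℝ SM G B1) (j : ℕ) :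
    EqOn ((Dp (0,1))^[j] (Dp (1,0) G)) (Dp (1,0) ((Dp (0,1))^[j] G)) B1 := by
  induction j generalizing G with
  | zero => exact fun p _ => rfl
  | succ j ih =>
    rw [Function.iterate_succ_apply]
    have h1 : EqOn (Dp (0,1) (Dp (1,0) G)) (Dp (1,0) (Dp (0,1) G)) B1 :=
      fun p hp => Dp_swap hG hp _ _
    refine (eqOn_Dp_iter h1 _ j).trans ?_
    rw [Function.iterate_succ_apply]
    exact ih (smooth_Dp hG _)

lemma DD_dp1 {G : ℝ × ℝ → ℝ} (hG : ContDiffOn ℝ SM G B1) (i j : ℕ) :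
    EqOn (DD i j (Dp (1,0) G)) (DD (i+1) j G) B1 := by
  show EqOn ((Dp (1,0))^[i] ((Dp (0,1))^[j] (Dp (1,0) G))) _ B1
  refine (eqOn_Dp_iter (Dp_comm_iter hG j) _ i).trans ?_
  rw [DD, Function.iterate_succ_apply]
  exact fun p _ => rfl

lemma DD_dp2 (G : ℝ × ℝ → ℝ) (i j : ℕ) : DD i j (Dp (0,1) G) = DD i (j+1) G := by
  rw [DD, DD, Function.iterate_succ_apply]

lemma Dp_add {A B : ℝ × ℝ → ℝ} (hA : ContDiffOn ℝ SM A B1) (hB : ContDiffOn ℝ SM B B1)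
    (v : ℝ × ℝ) : EqOn (Dp v (fun q => A q + B q)) (fun q => Dp v A q + Dp v B q) B1 := by
  intro p hp
  simp [Dp, fderiv_fun_add (diffAt hA hp) (diffAt hB hp)]

lemma Dp_iter_add {A B : ℝ × ℝ → ℝ} (hA : ContDiffOn ℝ SM A B1) (hB : ContDiffOn ℝ SM B B1)
    (v : ℝ × ℝ) (k : ℕ) :
    EqOn ((Dp v)^[k] (fun q => A q + B q)) (fun q => (Dp v)^[k] A q + (Dp v)^[k] B q) B1 := by
  induction k generalizing A B with
  | zero => exact fun p _ => rfl
  | succ k ih =>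
    rw [Function.iterate_succ_apply]
    refine (eqOn_Dp_iter (Dp_add hA hB v) _ k).trans ?_
    have := ih (smooth_Dp hA v) (smooth_Dp hB v)
    simpa [Function.iterate_succ_apply] using this

lemma DD_add {A B : ℝ × ℝ → ℝ} (hA : ContDiffOn ℝ SM A B1) (hB : ContDiffOn ℝ SM B B1)
    (i j : ℕ) :
    EqOn (DD i j (fun q => A q + B q)) (fun q => DD i j A q + DD i j B q) B1 := by
  show EqOn ((Dp (1,0))^[i] ((Dp (0,1))^[j] (fun q => A q + B q))) _ B1
  refine (eqOn_Dp_iter (Dp_iter_add hA hB _ j) _ i).trans ?_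
  exact Dp_iter_add (smooth_Dp_iter hA _ j) (smooth_Dp_iter hB _ j) _ i

lemma Dp_neg (A : ℝ × ℝ → ℝ) (v : ℝ × ℝ) :
    Dp v (fun q => -(A q)) = fun q => -(Dp v A q) := by
  funext p; simp [Dp, fderiv_neg]

lemma DD_neg (A : ℝ × ℝ → ℝ) (i j : ℕ) :
    DD i j (fun q => -(A q)) = fun q => -(DD i j A q) := by
  have key : ∀ (v : ℝ × ℝ) (k : ℕ) (A : ℝ × ℝ → ℝ),
      (Dp v)^[k] (fun q => -(A q)) = fun q => -((Dp v)^[k] A q) := by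
    intro v k
    induction k with
    | zero => intro A; rfl
    | succ k ih =>
      intro A
      rw [Function.iterate_succ_apply, Dp_neg, ih, Function.iterate_succ_apply]
  show (Dp (1,0))^[i] ((Dp (0,1))^[j] (fun q => -(A q))) = _
  rw [key, key]; rfl

lemma Dp_const (c : ℝ) (v : ℝ × ℝ) : Dp v (fun _ => c) = fun _ => 0 := by
  funext p; simp [Dp]

lemma Dp_iter_zero (v : ℝ × ℝ) (k : ℕ) : (Dp v)^[k] (fun _ => (0:ℝ)) = fun _ => 0 := by
  induction k with
  | zero => rfl
  | succ k ih => rw [Function.iterate_succ_apply, Dp_const, ih]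

lemma DD_const (c : ℝ) {i j : ℕ} (h : 1 ≤ i + j) : DD i j (fun _ => c) = fun _ => (0:ℝ) := by
  match i, j with
  | i, j+1 =>
    show (Dp (1,0))^[i] ((Dp (0,1))^[j+1] (fun _ => c)) = _
    rw [Function.iterate_succ_apply, Dp_const, Dp_iter_zero, Dp_iter_zero]
  | i+1, 0 =>
    show (Dp (1,0))^[i+1] (fun _ => c) = _
    rw [Function.iterate_succ_apply, Dp_const, Dp_iter_zero]

lemma Dp_mul {A B : ℝ × ℝ → ℝ} (hA : ContDiffOn ℝ SM A B1) (hB : ContDiffOn ℝ SM B B1)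
    (v : ℝ × ℝ) :
    EqOn (Dp v (fun q => A q * B q)) (fun q => A q * Dp v B q + Dp v A q * B q) B1 := by
  intro p hp
  simp only [Dp, fderiv_fun_mul (diffAt hA hp) (diffAt hB hp)]
  simp [mul_comm]

lemma Dp_comp {w : ℝ × ℝ → ℝ} {g : ℝ → ℝ} (hw : ContDiffOn ℝ SM w B1) (hg : ContDiff ℝ SM g)
    (v : ℝ × ℝ) :
    EqOn (Dp v (fun q => g (w q))) (fun q => deriv g (w q) * Dp v w q) B1 := by
  intro p hp
  have hgd : DifferentiableAt ℝ g (w p) := (hg.differentiable (by simp [SM])).differentiableAt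
  have hwd : DifferentiableAt ℝ w p := diffAt hw hp
  show fderiv ℝ (g ∘ w) p v = _
  rw [fderiv_comp p hgd hwd]
  simp only [ContinuousLinearMap.coe_comp', Function.comp_apply]
  have : ∀ s : ℝ, fderiv ℝ g (w p) s = s * deriv g (w p) := by
    intro s
    have : s = s • (1:ℝ) := by simp
    rw [this, (fderiv ℝ g (w p)).map_smul]
    simp [fderiv_apply_one_eq_deriv, smul_eq_mul]
  rw [this]
  ring_nf
  simp [Dp, mul_comm]

-- chunk 3 : the predicate V
def V (r : ℕ) (G : ℝ × ℝ → ℝ) : Prop :=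
  ContDiffOn ℝ SM G B1 ∧ ∀ i j : ℕ, i + j ≤ r → DD i j G 0 = 0

lemma V.smooth {r G} (h : V r G) : ContDiffOn ℝ SM G B1 := h.1

lemma V.mono {r G} (h : V (r+1) G) : V r G :=
  ⟨h.1, fun i j hij => h.2 i j (hij.trans (Nat.le_succ r))⟩

lemma V.zero_eq {r G} (h : V r G) : G 0 = 0 := h.2 0 0 (Nat.zero_le r)

lemma V.congr {r A B} (h : V r A) (hAB : EqOn A B B1) (hB : ContDiffOn ℝ SM B B1) :
    V r B :=
  ⟨hB, fun i j hij => by rw [← eqOn_DD hAB i j zero_mem_B1]; exact h.2 i j hij⟩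

lemma V.add {r A B} (hA : V r A) (hB : V r B) : V r (fun q => A q + B q) :=
  ⟨hA.1.add hB.1, fun i j hij => by
    rw [DD_add hA.1 hB.1 i j zero_mem_B1]
    show DD i j A 0 + DD i j B 0 = 0
    rw [hA.2 i j hij, hB.2 i j hij, add_zero]⟩

lemma V.dp1 {r G} (h : V (r+1) G) : V r (Dp (1,0) G) :=
  ⟨smooth_Dp h.1 _, fun i j hij => by
    rw [DD_dp1 h.1 i j zero_mem_B1]
    exact h.2 (i+1) j (by omega)⟩

lemma V.dp2 {r G} (h : V (r+1) G) : V r (Dp (0,1) G) :=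
  ⟨smooth_Dp h.1 _, fun i j hij => by
    rw [DD_dp2 G i j]
    exact h.2 i (j+1) (by omega)⟩

lemma V.step {r G} (hG : ContDiffOn ℝ SM G B1) (h0 : G 0 = 0)
    (h1 : V r (Dp (1,0) G)) (h2 : V r (Dp (0,1) G)) : V (r+1) G := by
  refine ⟨hG, fun i j hij => ?_⟩
  match i, j with
  | 0, 0 => exact h0
  | i+1, j =>
    rw [← DD_dp1 hG i j zero_mem_B1]
    exact h1.2 i j (by omega)
  | 0, j+1 =>
    rw [← DD_dp2 G 0 j]
    exact h2.2 0 j (by omega)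

lemma V.mul {r : ℕ} : ∀ {G H : ℝ × ℝ → ℝ}, V r G → ContDiffOn ℝ SM H B1 →
    V r (fun q => G q * H q) := by
  induction r with
  | zero =>
    intro G H hG hH
    refine ⟨hG.1.mul hH, fun i j hij => ?_⟩
    have hi : i = 0 := by omega
    have hj : j = 0 := by omega
    subst hi; subst hj
    show G 0 * H 0 = 0
    rw [hG.zero_eq, zero_mul]
  | succ r ih =>
    intro G H hG hH
    have hGH : ContDiffOn ℝ SM (fun q => G q * H q) B1 := hG.1.mul hH
    refine V.step hGH (by show G 0 * H 0 = 0; rw [hG.zero_eq, zero_mul]) ?_ ?_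
    · have hsum : V r (fun q => G q * Dp (1,0) H q + Dp (1,0) G q * H q) :=
        (ih hG.mono (smooth_Dp hH _)).add (ih hG.dp1 hH)
      exact hsum.congr (fun p hp => (Dp_mul hG.1 hH _ hp).symm) (smooth_Dp hGH _)
    · have hsum : V r (fun q => G q * Dp (0,1) H q + Dp (0,1) G q * H q) :=
        (ih hG.mono (smooth_Dp hH _)).add (ih hG.dp2 hH)
      exact hsum.congr (fun p hp => (Dp_mul hG.1 hH _ hp).symm) (smooth_Dp hGH _)

lemma V.chain : ∀ (r : ℕ) (w : ℝ × ℝ → ℝ) (g : ℝ → ℝ), V r w → ContDiff ℝ SM g →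
    V r (fun q => g (w q) - g 0) := by
  intro r
  induction r with
  | zero =>
    intro w g hw hg
    refine ⟨(hg.comp_contDiffOn hw.1).sub contDiffOn_const, fun i j hij => ?_⟩
    have hi : i = 0 := by omega
    have hj : j = 0 := by omega
    subst hi; subst hj
    show g (w 0) - g 0 = 0
    rw [hw.zero_eq, sub_self]
  | succ r ih =>
    intro w g hw hg
    set g₀ : ℝ → ℝ := fun t => g t - g 0 with hg₀def
    have hg₀ : ContDiff ℝ SM g₀ := hg.sub contDiff_const
    have hdg : ContDiff ℝ SM (deriv g) := (contDiff_infty_iff_deriv.mp hg).2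
    have hh : ContDiffOn ℝ SM (fun q => g (w q) - g 0) B1 :=
      (hg.comp_contDiffOn hw.1).sub contDiffOn_const
    have hcomp : (fun q => g (w q) - g 0) = fun q => g₀ (w q) := rfl
    have hderiv_eq : deriv g₀ = deriv g := by
      funext t
      exact deriv_sub_const (g 0)
    refine V.step hh (by show g (w 0) - g 0 = 0; rw [hw.zero_eq, sub_self]) ?_ ?_
    · have hsum : V r (fun q =>
          (deriv g (w q) - deriv g 0) * Dp (1,0) w q + Dp (1,0) w q * deriv g 0) :=
        (V.mul (ih w (deriv g) hw.mono hdg) (smooth_Dp hw.1 _)).add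
          (V.mul hw.dp1 contDiffOn_const)
      refine hsum.congr ?_ (smooth_Dp hh _)
      intro p hp
      show _ = Dp (1,0) (fun q => g (w q) - g 0) p
      rw [hcomp, Dp_comp hw.1 hg₀ (1,0) hp, hderiv_eq]
      show (deriv g (w p) - deriv g 0) * Dp (1,0) w p + Dp (1,0) w p * deriv g 0 =
        deriv g (w p) * Dp (1,0) w p
      ring
    · have hsum : V r (fun q =>
          (deriv g (w q) - deriv g 0) * Dp (0,1) w q + Dp (0,1) w q * deriv g 0) :=
        (V.mul (ih w (deriv g) hw.mono hdg) (smooth_Dp hw.1 _)).add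
          (V.mul hw.dp2 contDiffOn_const)
      refine hsum.congr ?_ (smooth_Dp hh _)
      intro p hp
      show _ = Dp (0,1) (fun q => g (w q) - g 0) p
      rw [hcomp, Dp_comp hw.1 hg₀ (0,1) hp, hderiv_eq]
      show (deriv g (w p) - deriv g 0) * Dp (0,1) w p + Dp (0,1) w p * deriv g 0 =
        deriv g (w p) * Dp (0,1) w p
      ring

lemma deriv_slice_y {W : ℝ × ℝ → ℝ} (hW : ContDiffOn ℝ SM W B1) {x y : ℝ}
    (hxy : (x, y) ∈ B1) : deriv (fun t => W (x, t)) y = Dp (0,1) W (x, y) := by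
  have hc : HasDerivAt (fun t : ℝ => ((x : ℝ), t)) (0, 1) y :=
    HasDerivAt.prodMk (hasDerivAt_const y x) (hasDerivAt_id y)
  have := ((diffAt hW hxy).hasFDerivAt).comp_hasDerivAt y hc
  exact this.deriv

lemma deriv_slice_x {W : ℝ × ℝ → ℝ} (hW : ContDiffOn ℝ SM W B1) {x y : ℝ}
    (hxy : (x, y) ∈ B1) : deriv (fun t => W (t, y)) x = Dp (1,0) W (x, y) := by
  have hc : HasDerivAt (fun t : ℝ => (t, (y : ℝ))) (1, 0) x :=
    HasDerivAt.prodMk (hasDerivAt_id x) (hasDerivAt_const x y)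
  have := ((diffAt hW hxy).hasFDerivAt).comp_hasDerivAt x hc
  exact this.deriv

lemma bridge_y (u : ℝ → ℝ → ℝ) (hu : ContDiffOn ℝ SM (fun p : ℝ × ℝ => u p.1 p.2) B1)
    (j : ℕ) : ∀ x y : ℝ, (x, y) ∈ B1 →
    (pdy^[j] u) x y = DD 0 j (fun p : ℝ × ℝ => u p.1 p.2) (x, y) := by
  set U : ℝ × ℝ → ℝ := fun p => u p.1 p.2 with hU
  induction j with
  | zero => intro x y _; rfl
  | succ j ih =>
    intro x y hxy
    rw [Function.iterate_succ_apply']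
    show deriv (fun t => (pdy^[j] u) x t) y = _
    have hnb : ∀ᶠ t in nhds y, (x, t) ∈ B1 := by
      have : Continuous (fun t : ℝ => ((x:ℝ), t)) := continuous_const.prodMk continuous_id
      exact this.continuousAt.preimage_mem_nhds (isOpen_B1.mem_nhds hxy)
    have hev : (fun t => (pdy^[j] u) x t) =ᶠ[nhds y] (fun t => DD 0 j U (x, t)) := by
      filter_upwards [hnb] with t ht
      exact ih x t ht
    rw [hev.deriv_eq, deriv_slice_y (smooth_DD hu 0 j) hxy]
    show Dp (0,1) ((Dp (0,1))^[j] U) (x,y) = (Dp (0,1))^[j+1] U (x,y)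
    rw [Function.iterate_succ_apply']

lemma bridge (u : ℝ → ℝ → ℝ) (hu : ContDiffOn ℝ SM (fun p : ℝ × ℝ => u p.1 p.2) B1)
    (i j : ℕ) : ∀ x y : ℝ, (x, y) ∈ B1 →
    pd u i j x y = DD i j (fun p : ℝ × ℝ => u p.1 p.2) (x, y) := by
  set U : ℝ × ℝ → ℝ := fun p => u p.1 p.2 with hU
  induction i with
  | zero => exact bridge_y u hu j
  | succ i ih =>
    intro x y hxy
    show (pdx^[i+1] (pdy^[j] u)) x y = _
    rw [Function.iterate_succ_apply']
    show deriv (fun t => (pdx^[i] (pdy^[j] u)) t y) x = _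
    have hnb : ∀ᶠ t in nhds x, (t, y) ∈ B1 := by
      have : Continuous (fun t : ℝ => (t, (y:ℝ))) := continuous_id.prodMk continuous_const
      exact this.continuousAt.preimage_mem_nhds (isOpen_B1.mem_nhds hxy)
    have hev : (fun t => (pdx^[i] (pdy^[j] u)) t y) =ᶠ[nhds x] (fun t => DD i j U (t, y)) := by
      filter_upwards [hnb] with t ht
      exact ih t y ht
    rw [hev.deriv_eq, deriv_slice_x (smooth_DD hu i j) hxy]
    show Dp (1,0) ((Dp (1,0))^[i] ((Dp (0,1))^[j] U)) (x,y) = (Dp (1,0))^[i+1] ((Dp (0,1))^[j] U) (x,y)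
    rw [Function.iterate_succ_apply']

end Alt

open Alt

/-- alternating structure of the `n`-th order derivatives at the origin
of a solution whose derivatives of orders `1,…,n-1` all vanish at the origin. -/
theorem nth_derivatives_alternate
    (u : ℝ → ℝ → ℝ) (f : ℝ → ℝ)
    (hu : ContDiffOn ℝ (⊤ : ℕ∞) (fun p : ℝ × ℝ => u p.1 p.2) B1)
    (hf : ContDiff ℝ (⊤ : ℕ∞) f)
    (hpde : ∀ x y : ℝ, (x, y) ∈ B1 → -(pd u 2 0 x y + pd u 0 2 x y) = f (u x y))
    (n : ℕ) (hn3 : 3 ≤ n)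
    (hvan : ∀ m k : ℕ, 1 ≤ m → m ≤ n - 1 → k ≤ m → pd u (m - k) k 0 0 = 0) :
    (∀ h : ℕ, 2 * h ≤ n →
      pd u (n - 2 * h) (2 * h) 0 0 = (-1 : ℝ) ^ h * pd u n 0 0 0) ∧
    (∀ h : ℕ, 2 * h + 1 ≤ n →
      pd u (n - (2 * h + 1)) (2 * h + 1) 0 0 = (-1 : ℝ) ^ h * pd u (n - 1) 1 0 0) := by
  classical
  set U : ℝ × ℝ → ℝ := fun p => u p.1 p.2 with hUdef
  have hu' : ContDiffOn ℝ SM U B1 := hu.of_le (by simp)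
  have hf' : ContDiff ℝ SM f := hf.of_le (by simp)
  have hbr : ∀ i j : ℕ, pd u i j 0 0 = DD i j U 0 := fun i j =>
    bridge u hu' i j 0 0 zero_mem_B1
  have hvanDD : ∀ i j : ℕ, 1 ≤ i + j → i + j ≤ n - 1 → DD i j U 0 = 0 := by
    intro i j h1 h2
    have h := hvan (i+j) j h1 h2 (by omega)
    have hij : i + j - j = i := by omega
    rw [hij] at h
    rw [← hbr i j]; exact h
  have hwsm : ContDiffOn ℝ SM (fun p => U p - U 0) B1 := hu'.sub contDiffOn_const
  have hwadd : (fun p : ℝ × ℝ => U p - U 0)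
      = (fun p => U p + (fun _ : ℝ × ℝ => -(U 0)) p) := by
    funext p
    show U p - U 0 = U p + -(U 0)
    ring
  have hw : V (n-1) (fun p => U p - U 0) := by
    refine ⟨hwsm, fun i j hij => ?_⟩
    rcases Nat.eq_zero_or_pos (i + j) with h0 | h1
    · have hi : i = 0 := by omega
      have hj : j = 0 := by omega
      subst hi; subst hj
      show U 0 - U 0 = 0
      ring
    · rw [hwadd, DD_add hu' contDiffOn_const i j zero_mem_B1]
      show DD i j U 0 + DD i j (fun _ : ℝ × ℝ => -(U 0)) 0 = 0
      rw [hvanDD i j h1 hij, DD_const _ h1]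
      simp
  set g : ℝ → ℝ := fun t => f (U 0 + t) with hgdef
  have hg : ContDiff ℝ SM g := hf'.comp (contDiff_const.add contDiff_id)
  have hch : V (n-1) (fun q => g ((fun p : ℝ × ℝ => U p - U 0) q) - g 0) :=
    V.chain (n-1) _ g hw hg
  have hfU : ∀ i j : ℕ, 1 ≤ i + j → i + j ≤ n - 1 → DD i j (fun p => f (U p)) 0 = 0 := by
    intro i j h1 h2
    have hfe : (fun p : ℝ × ℝ => f (U p)) =
        (fun p => (fun q => g ((fun p' : ℝ × ℝ => U p' - U 0) q) - g 0) p
          + (fun _ : ℝ × ℝ => g 0) p) := by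
      funext p
      show f (U p) = (f (U 0 + (U p - U 0)) - f (U 0 + 0)) + f (U 0 + 0)
      have e1 : U 0 + (U p - U 0) = U p := by ring
      rw [e1, add_zero]
      ring
    rw [hfe, DD_add hch.1 contDiffOn_const i j zero_mem_B1]
    show DD i j (fun q => g ((fun p' : ℝ × ℝ => U p' - U 0) q) - g 0) 0
      + DD i j (fun _ : ℝ × ℝ => g 0) 0 = 0
    rw [hch.2 i j h2, DD_const _ h1]
    simp
  have hΦ : EqOn (fun p : ℝ × ℝ => DD 2 0 U p + DD 0 2 U p) (fun p => -(f (U p))) B1 := by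
    intro p hp
    obtain ⟨x, y⟩ := p
    have h := hpde x y hp
    have h2 := bridge u hu' 2 0 x y hp
    have h0 := bridge u hu' 0 2 x y hp
    show DD 2 0 U (x,y) + DD 0 2 U (x,y) = -(f (u x y))
    rw [← h2, ← h0]
    linarith [h]
  have key : ∀ i j : ℕ, i + j = n - 2 → DD (i+2) j U 0 + DD i (j+2) U 0 = 0 := by
    intro i j hij
    have e1 := eqOn_DD hΦ i j zero_mem_B1
    have eneg : DD i j (fun p => -(f (U p))) 0 = -(DD i j (fun p => f (U p)) 0) := by
      rw [DD_neg (fun p => f (U p)) i j]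
    have hz : DD i j (fun p => f (U p)) 0 = 0 := hfU i j (by omega) (by omega)
    have eadd := DD_add (smooth_DD hu' 2 0) (smooth_DD hu' 0 2) i j zero_mem_B1
    have h20 : DD i j (DD 2 0 U) 0 = DD (i+2) j U 0 := by
      have s1 : EqOn (DD i j (Dp (1,0) (Dp (1,0) U))) (DD (i+1) j (Dp (1,0) U)) B1 :=
        DD_dp1 (smooth_Dp hu' _) i j
      have s2 : EqOn (DD (i+1) j (Dp (1,0) U)) (DD (i+2) j U) B1 := DD_dp1 hu' (i+1) j
      have hrfl : DD 2 0 U = Dp (1,0) (Dp (1,0) U) := rfl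
      rw [hrfl]
      exact (s1.trans s2) zero_mem_B1
    have h02 : DD i j (DD 0 2 U) 0 = DD i (j+2) U 0 := by
      have hrfl : DD 0 2 U = Dp (0,1) (Dp (0,1) U) := rfl
      rw [hrfl, DD_dp2, DD_dp2]
    calc DD (i+2) j U 0 + DD i (j+2) U 0
        = DD i j (DD 2 0 U) 0 + DD i j (DD 0 2 U) 0 := by rw [h20, h02]
      _ = DD i j (fun p => DD 2 0 U p + DD 0 2 U p) 0 := eadd.symm
      _ = DD i j (fun p => -(f (U p))) 0 := e1
      _ = 0 := by rw [eneg, hz, neg_zero]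
  have key2 : ∀ k : ℕ, k + 2 ≤ n → DD (n-(k+2)) (k+2) U 0 = -(DD (n-k) k U 0) := by
    intro k hk
    have h1 : (n - 2 - k) + k = n - 2 := by omega
    have hthis := key (n-2-k) k h1
    have h2 : n - 2 - k + 2 = n - k := by omega
    rw [h2] at hthis
    have h3 : n - 2 - k = n - (k+2) := by omega
    rw [h3] at hthis
    linarith
  have heven : ∀ h : ℕ, 2*h ≤ n → DD (n-2*h) (2*h) U 0 = (-1:ℝ)^h * DD n 0 U 0 := by
    intro h
    induction h with
    | zero => intro _; simp
    | succ h ih =>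
      intro hh
      have e := key2 (2*h) (by omega)
      have h4 : 2*h+2 = 2*(h+1) := by ring
      rw [h4] at e
      rw [e, ih (by omega)]
      ring
  have hodd : ∀ h : ℕ, 2*h+1 ≤ n →
      DD (n-(2*h+1)) (2*h+1) U 0 = (-1:ℝ)^h * DD (n-1) 1 U 0 := by
    intro h
    induction h with
    | zero => intro _; simp
    | succ h ih =>
      intro hh
      have e := key2 (2*h+1) (by omega)
      have h4 : 2*h+1+2 = 2*(h+1)+1 := by ring
      rw [h4] at e
      rw [e, ih (by omega)]
      ring
  constructor
  · intro h hh
    rw [hbr, hbr, heven h hh]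
  · intro h hh
    rw [hbr, hbr, hodd h hh]
end

section
/- Let u be a solution of -Δu = f(u) in B₁ and let n ≥ 3 be an integer such that all partial derivatives of u of every order m with 1 ≤ m ≤ n-1 vanish at (0,0). Set α = ∂ⁿu/∂xⁿ(0,0) and β = ∂ⁿu/∂x^{n-1}∂y(0,0). Then there exist a constant C > 0 and a neighborhood of the origin on which n!·(u(x,y) - u(0,0)) = α·Re(zⁿ) + β·Im(zⁿ) + R(x,y), where z = x + iy and |R(x,y)| ≤ C(|x|^{n+1} + |y|^{n+1}). Moreover, if some partial derivative of u of order n is nonzero at (0,0), then (α, β) ≠ (0,0). -/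
open Filter Metric Set

open ContDiff

section PDEInfra

noncomputable def dd (v : ℝ × ℝ) (H : ℝ × ℝ → ℝ) : ℝ × ℝ → ℝ := fun p => fderiv ℝ H p v

noncomputable def wd (a b : ℕ) (H : ℝ × ℝ → ℝ) : ℝ × ℝ → ℝ :=
  (dd (1,0))^[a] ((dd (0,1))^[b] H)

lemma infty_add_one : (∞ + 1 : WithTop ℕ∞) = ∞ := rfl



variable {s : Set (ℝ × ℝ)} {X Y H : ℝ × ℝ → ℝ}

lemma sm_dd (hs : IsOpen s) (hX : ContDiffOn ℝ ∞ X s) (v : ℝ × ℝ) :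
    ContDiffOn ℝ ∞ (dd v X) s := by
  have h1 : ContDiffOn ℝ ∞ (fderiv ℝ X) s := hX.fderiv_of_isOpen hs (le_of_eq infty_add_one)
  exact h1.clm_apply contDiffOn_const

lemma sm_it (hs : IsOpen s) (hX : ContDiffOn ℝ ∞ X s) (v : ℝ × ℝ) (k : ℕ) :
    ContDiffOn ℝ ∞ ((dd v)^[k] X) s := by
  induction k generalizing X with
  | zero => exact hX
  | succ k ih => rw [Function.iterate_succ_apply]; exact ih (sm_dd hs hX v)

lemma sm_wd (hs : IsOpen s) (hX : ContDiffOn ℝ ∞ X s) (a b : ℕ) :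
    ContDiffOn ℝ ∞ (wd a b X) s := sm_it hs (sm_it hs hX _ b) _ a

lemma diffAt (hs : IsOpen s) (hX : ContDiffOn ℝ ∞ X s) {p : ℝ × ℝ} (hp : p ∈ s) :
    DifferentiableAt ℝ X p :=
  (hX.contDiffAt (hs.mem_nhds hp)).differentiableAt (by norm_num)

lemma dd_congr (hs : IsOpen s) (h : ∀ q ∈ s, X q = Y q) {p : ℝ × ℝ} (hp : p ∈ s) (v : ℝ × ℝ) :
    dd v X p = dd v Y p := by
  have : X =ᶠ[nhds p] Y := by
    filter_upwards [hs.mem_nhds hp] with q hq using h q hq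
  simp only [dd, this.fderiv_eq]

lemma it_congr (hs : IsOpen s) (v : ℝ × ℝ) (k : ℕ) (h : ∀ q ∈ s, X q = Y q) :
    ∀ p ∈ s, (dd v)^[k] X p = (dd v)^[k] Y p := by
  induction k generalizing X Y with
  | zero => exact h
  | succ k ih =>
    rw [Function.iterate_succ_apply, Function.iterate_succ_apply]
    exact ih (fun q hq => dd_congr hs h hq v)

lemma wd_congr (hs : IsOpen s) (a b : ℕ) (h : ∀ q ∈ s, X q = Y q) :
    ∀ p ∈ s, wd a b X p = wd a b Y p :=
  it_congr hs _ a (it_congr hs _ b h)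

-- additivity
lemma dd_add (hs : IsOpen s) (hX : ContDiffOn ℝ ∞ X s) (hY : ContDiffOn ℝ ∞ Y s)
    {p : ℝ × ℝ} (hp : p ∈ s) (v : ℝ × ℝ) :
    dd v (fun q => X q + Y q) p = dd v X p + dd v Y p := by
  simp only [dd, fderiv_fun_add (diffAt hs hX hp) (diffAt hs hY hp)]
  rfl

lemma it_add (hs : IsOpen s) (v : ℝ × ℝ) (k : ℕ) (hX : ContDiffOn ℝ ∞ X s)
    (hY : ContDiffOn ℝ ∞ Y s) :
    ∀ p ∈ s, (dd v)^[k] (fun q => X q + Y q) p = (dd v)^[k] X p + (dd v)^[k] Y p := by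
  induction k generalizing X Y with
  | zero => exact fun p _ => rfl
  | succ k ih =>
    intro p hp
    rw [Function.iterate_succ_apply, Function.iterate_succ_apply, Function.iterate_succ_apply]
    calc (dd v)^[k] (dd v fun q => X q + Y q) p
        = (dd v)^[k] (fun q => dd v X q + dd v Y q) p :=
          it_congr hs v k (fun q hq => dd_add hs hX hY hq v) p hp
      _ = _ := ih (sm_dd hs hX v) (sm_dd hs hY v) p hp

lemma wd_add (hs : IsOpen s) (a b : ℕ) (hX : ContDiffOn ℝ ∞ X s) (hY : ContDiffOn ℝ ∞ Y s) :
    ∀ p ∈ s, wd a b (fun q => X q + Y q) p = wd a b X p + wd a b Y p := by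
  intro p hp
  unfold wd
  calc ((dd (1,0))^[a] ((dd (0,1))^[b] fun q => X q + Y q)) p
      = (dd (1,0))^[a] (fun q => (dd (0,1))^[b] X q + (dd (0,1))^[b] Y q) p :=
        it_congr hs _ a (it_add hs _ b hX hY) p hp
    _ = _ := it_add hs _ a (sm_it hs hX _ b) (sm_it hs hY _ b) p hp

-- scalar multiple
lemma dd_cmul (hs : IsOpen s) (hX : ContDiffOn ℝ ∞ X s) {p : ℝ × ℝ} (hp : p ∈ s)
    (c : ℝ) (v : ℝ × ℝ) : dd v (fun q => c * X q) p = c * dd v X p := by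
  simp only [dd, fderiv_const_mul (diffAt hs hX hp) c]
  rfl

lemma it_cmul (hs : IsOpen s) (v : ℝ × ℝ) (k : ℕ) (c : ℝ) (hX : ContDiffOn ℝ ∞ X s) :
    ∀ p ∈ s, (dd v)^[k] (fun q => c * X q) p = c * (dd v)^[k] X p := by
  induction k generalizing X with
  | zero => exact fun p _ => rfl
  | succ k ih =>
    intro p hp
    rw [Function.iterate_succ_apply, Function.iterate_succ_apply]
    calc (dd v)^[k] (dd v fun q => c * X q) p
        = (dd v)^[k] (fun q => c * dd v X q) p :=
          it_congr hs v k (fun q hq => dd_cmul hs hX hq c v) p hp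
      _ = _ := ih (sm_dd hs hX v) p hp

lemma wd_cmul (hs : IsOpen s) (a b : ℕ) (c : ℝ) (hX : ContDiffOn ℝ ∞ X s) :
    ∀ p ∈ s, wd a b (fun q => c * X q) p = c * wd a b X p := by
  intro p hp
  unfold wd
  calc ((dd (1,0))^[a] ((dd (0,1))^[b] fun q => c * X q)) p
      = (dd (1,0))^[a] (fun q => c * (dd (0,1))^[b] X q) p :=
        it_congr hs _ a (it_cmul hs _ b c hX) p hp
    _ = _ := it_cmul hs _ a c (sm_it hs hX _ b) p hp

-- constants
lemma dd_const (c : ℝ) (v : ℝ × ℝ) : dd v (fun _ => c) = fun _ => 0 := by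
  funext p; simp [dd]

lemma it_const0 (v : ℝ × ℝ) (k : ℕ) : (dd v)^[k] (fun _ => (0:ℝ)) = fun _ => 0 := by
  induction k with
  | zero => rfl
  | succ k ih => rw [Function.iterate_succ_apply, dd_const, ih]

lemma wd_const (a b : ℕ) (hab : 1 ≤ a + b) (c : ℝ) : wd a b (fun _ => c) = fun _ => 0 := by
  unfold wd
  rcases Nat.eq_zero_or_pos b with hb | hb
  · subst hb
    obtain ⟨a', rfl⟩ : ∃ a', a = a' + 1 := ⟨a - 1, by omega⟩
    rw [Function.iterate_zero_apply, Function.iterate_succ_apply, dd_const, it_const0]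
  · obtain ⟨b', rfl⟩ : ∃ b', b = b' + 1 := ⟨b - 1, by omega⟩
    rw [Function.iterate_succ_apply, dd_const, it_const0, it_const0]

-- Clairaut
lemma clairaut (hs : IsOpen s) (hX : ContDiffOn ℝ ∞ X s) {p : ℝ × ℝ} (hp : p ∈ s)
    (v w : ℝ × ℝ) : dd w (dd v X) p = dd v (dd w X) p := by
  have hD : DifferentiableAt ℝ (fderiv ℝ X) p :=
    (((hX.fderiv_of_isOpen hs (le_of_eq infty_add_one)).contDiffAt
      (hs.mem_nhds hp)).differentiableAt (by norm_num))
  have key : ∀ v w : ℝ × ℝ, dd w (dd v X) p = fderiv ℝ (fderiv ℝ X) p w v := by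
    intro v w
    have := fderiv_clm_apply hD (differentiableAt_const v)
    show fderiv ℝ (fun q => fderiv ℝ X q v) p w = _
    rw [this]
    simp
  rw [key, key]
  exact (hX.contDiffAt (hs.mem_nhds hp)).isSymmSndFDerivAt (by simp; exact WithTop.coe_le_coe.mpr le_top) w v

lemma it_swap (hs : IsOpen s) (hX : ContDiffOn ℝ ∞ X s) (v w : ℝ × ℝ) (b : ℕ) :
    ∀ p ∈ s, (dd w)^[b] (dd v X) p = dd v ((dd w)^[b] X) p := by
  induction b generalizing X with
  | zero => exact fun p _ => rfl
  | succ b ih =>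
    intro p hp
    rw [Function.iterate_succ_apply]
    calc (dd w)^[b] (dd w (dd v X)) p
        = (dd w)^[b] (dd v (dd w X)) p :=
          it_congr hs w b (fun q hq => clairaut hs hX hq v w) p hp
      _ = dd v ((dd w)^[b] (dd w X)) p := ih (sm_dd hs hX w) p hp
      _ = _ := by rw [← Function.iterate_succ_apply]

lemma wd_d1 (hs : IsOpen s) (hX : ContDiffOn ℝ ∞ X s) (a b : ℕ) :
    ∀ p ∈ s, wd a b (dd (1,0) X) p = wd (a+1) b X p := by
  intro p hp
  unfold wd
  calc ((dd (1,0))^[a] ((dd (0,1))^[b] (dd (1,0) X))) p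
      = (dd (1,0))^[a] (dd (1,0) ((dd (0,1))^[b] X)) p :=
        it_congr hs _ a (it_swap hs hX _ _ b) p hp
    _ = _ := by rw [← Function.iterate_succ_apply]

lemma wd_d2 (a b : ℕ) (X : ℝ × ℝ → ℝ) : wd a b (dd (0,1) X) = wd a (b+1) X := by
  unfold wd
  rw [← Function.iterate_succ_apply]

lemma wd_peel1 (a : ℕ) (X : ℝ × ℝ → ℝ) : wd (a+1) 0 X = wd a 0 (dd (1,0) X) := by
  unfold wd
  simp only [Function.iterate_zero_apply, Function.iterate_succ_apply]

lemma dd_mul (hs : IsOpen s) (hX : ContDiffOn ℝ ∞ X s) (hY : ContDiffOn ℝ ∞ Y s)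
    {p : ℝ × ℝ} (hp : p ∈ s) (v : ℝ × ℝ) :
    dd v (fun q => X q * Y q) p = dd v X p * Y p + X p * dd v Y p := by
  simp only [dd, fderiv_fun_mul (diffAt hs hX hp) (diffAt hs hY hp)]
  simp only [ContinuousLinearMap.add_apply, ContinuousLinearMap.smul_apply, smul_eq_mul]
  ring

lemma dd_comp (hs : IsOpen s) (hX : ContDiffOn ℝ ∞ X s) {g : ℝ → ℝ} (hg : ContDiff ℝ ∞ g)
    {p : ℝ × ℝ} (hp : p ∈ s) (v : ℝ × ℝ) :
    dd v (fun q => g (X q)) p = dd v X p * deriv g (X p) := by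
  have h1 : HasDerivAt g (deriv g (X p)) (X p) :=
    ((hg.differentiable (by norm_num)) (X p)).hasDerivAt
  have h2 : HasFDerivAt (fun q => g (X q))
      ((ContinuousLinearMap.smulRight (1 : ℝ →L[ℝ] ℝ) (deriv g (X p))).comp
        (fderiv ℝ X p)) p :=
    h1.hasFDerivAt.comp p (diffAt hs hX hp).hasFDerivAt
  simp only [dd, h2.fderiv]
  simp [smul_eq_mul]

-- `wd a b X 0 = 0` for all `a+b ≤ m`, closed under mult by smooth
lemma Vmul (hs : IsOpen s) (h0 : (0:ℝ×ℝ) ∈ s) (m : ℕ) :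
    ∀ (X Y : ℝ × ℝ → ℝ), ContDiffOn ℝ ∞ X s → ContDiffOn ℝ ∞ Y s →
    (∀ a b, a + b ≤ m → wd a b X 0 = 0) →
    ∀ a b, a + b ≤ m → wd a b (fun q => X q * Y q) 0 = 0 := by
  induction m with
  | zero =>
    intro X Y _ _ hV a b hab
    obtain ⟨rfl, rfl⟩ : a = 0 ∧ b = 0 := by omega
    have : X 0 = 0 := hV 0 0 le_rfl
    show X 0 * Y 0 = 0
    rw [this, zero_mul]
  | succ m ih =>
    intro X Y hX hY hV a b hab
    rcases Nat.eq_zero_or_pos b with hb | hb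
    · subst hb
      rcases Nat.eq_zero_or_pos a with ha | ha
      · subst ha
        have : X 0 = 0 := hV 0 0 (by omega)
        show X 0 * Y 0 = 0
        rw [this, zero_mul]
      · obtain ⟨a', rfl⟩ : ∃ a', a = a' + 1 := ⟨a - 1, by omega⟩
        rw [wd_peel1]
        have e1 : ∀ q ∈ s, dd (1,0) (fun q => X q * Y q) q
            = (fun q => dd (1,0) X q * Y q) q + (fun q => X q * dd (1,0) Y q) q :=
          fun q hq => dd_mul hs hX hY hq _
        rw [wd_congr hs a' 0 e1 0 h0, wd_add hs a' 0
          ((sm_dd hs hX _).mul hY) (hX.mul (sm_dd hs hY _)) 0 h0]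
        have r1 : wd a' 0 (fun q => dd (1,0) X q * Y q) 0 = 0 := by
          apply ih (dd (1,0) X) Y (sm_dd hs hX _) hY _ a' 0 (by omega)
          intro a b hab
          rw [wd_d1 hs hX a b 0 h0]
          exact hV (a+1) b (by omega)
        have r2 : wd a' 0 (fun q => X q * dd (1,0) Y q) 0 = 0 := by
          apply ih X (dd (1,0) Y) hX (sm_dd hs hY _) _ a' 0 (by omega)
          intro a b hab
          exact hV a b (by omega)
        rw [r1, r2, add_zero]
    · obtain ⟨b', rfl⟩ : ∃ b', b = b' + 1 := ⟨b - 1, by omega⟩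
      rw [← wd_d2]
      have e1 : ∀ q ∈ s, dd (0,1) (fun q => X q * Y q) q
          = (fun q => dd (0,1) X q * Y q) q + (fun q => X q * dd (0,1) Y q) q :=
        fun q hq => dd_mul hs hX hY hq _
      rw [wd_congr hs a b' e1 0 h0, wd_add hs a b'
        ((sm_dd hs hX _).mul hY) (hX.mul (sm_dd hs hY _)) 0 h0]
      have r1 : wd a b' (fun q => dd (0,1) X q * Y q) 0 = 0 := by
        apply ih (dd (0,1) X) Y (sm_dd hs hX _) hY _ a b' (by omega)
        intro a b hab
        rw [wd_d2]
        exact hV a (b+1) (by omega)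
      have r2 : wd a b' (fun q => X q * dd (0,1) Y q) 0 = 0 := by
        apply ih X (dd (0,1) Y) hX (sm_dd hs hY _) _ a b' (by omega)
        intro a b hab
        exact hV a b (by omega)
      rw [r1, r2, add_zero]

lemma Vcomp (hs : IsOpen s) (h0 : (0:ℝ×ℝ) ∈ s) (m : ℕ) {g : ℝ → ℝ} (hg : ContDiff ℝ ∞ g)
    (hX : ContDiffOn ℝ ∞ X s)
    (hV : ∀ a b, 1 ≤ a + b → a + b ≤ m → wd a b X 0 = 0) :
    ∀ a b, 1 ≤ a + b → a + b ≤ m → wd a b (fun q => g (X q)) 0 = 0 := by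
  intro a b h1 h2
  have hg' : ContDiff ℝ ∞ (deriv g) := (contDiff_infty_iff_deriv.1 hg).2
  have hsm : ContDiffOn ℝ ∞ (fun q => deriv g (X q)) s := hg'.comp_contDiffOn hX
  rcases Nat.eq_zero_or_pos b with hb | hb
  · subst hb
    obtain ⟨a', rfl⟩ : ∃ a', a = a' + 1 := ⟨a - 1, by omega⟩
    rw [wd_peel1]
    have e1 : ∀ q ∈ s, dd (1,0) (fun q => g (X q)) q
        = (fun q => dd (1,0) X q * deriv g (X q)) q :=
      fun q hq => dd_comp hs hX hg hq _
    rw [wd_congr hs a' 0 e1 0 h0]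
    apply Vmul hs h0 (m-1) (dd (1,0) X) _ (sm_dd hs hX _) hsm _ a' 0 (by omega)
    intro a b hab
    rw [wd_d1 hs hX a b 0 h0]
    exact hV (a+1) b (by omega) (by omega)
  · obtain ⟨b', rfl⟩ : ∃ b', b = b' + 1 := ⟨b - 1, by omega⟩
    rw [← wd_d2]
    have e1 : ∀ q ∈ s, dd (0,1) (fun q => g (X q)) q
        = (fun q => dd (0,1) X q * deriv g (X q)) q :=
      fun q hq => dd_comp hs hX hg hq _
    rw [wd_congr hs a b' e1 0 h0]
    apply Vmul hs h0 (m-1) (dd (0,1) X) _ (sm_dd hs hX _) hsm _ a b' (by omega)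
    intro a b hab
    rw [wd_d2]
    exact hV a (b+1) (by omega) (by omega)

lemma pdx_eq {x y : ℝ} (hX : DifferentiableAt ℝ X (x, y)) :
    deriv (fun t => X (t, y)) x = dd (1,0) X (x, y) := by
  have hl : HasDerivAt (fun t : ℝ => ((t, y) : ℝ × ℝ)) ((1:ℝ), (0:ℝ)) x :=
    (hasDerivAt_id x).prodMk (hasDerivAt_const x y)
  exact (hX.hasFDerivAt.comp_hasDerivAt x hl).deriv

lemma pdy_eq {x y : ℝ} (hX : DifferentiableAt ℝ X (x, y)) :
    deriv (fun t => X (x, t)) y = dd (0,1) X (x, y) := by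
  have hl : HasDerivAt (fun t : ℝ => ((x, t) : ℝ × ℝ)) ((0:ℝ), (1:ℝ)) y :=
    (hasDerivAt_const y x).prodMk (hasDerivAt_id y)
  exact (hX.hasFDerivAt.comp_hasDerivAt y hl).deriv

-- translation, pdy layer
lemma trans_pdy {u : ℝ → ℝ → ℝ}
    (hu : ContDiffOn ℝ ∞ (fun p : ℝ × ℝ => u p.1 p.2) B1) (j : ℕ) :
    ∀ p ∈ B1, (pdy^[j] u) p.1 p.2 = (dd (0,1))^[j] (fun p : ℝ × ℝ => u p.1 p.2) p := by
  have hB : IsOpen B1 := isOpen_ball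
  induction j with
  | zero => exact fun p _ => rfl
  | succ j ih =>
    intro p hp
    rw [Function.iterate_succ_apply', Function.iterate_succ_apply']
    show deriv (fun t => (pdy^[j] u) p.1 t) p.2 = _
    have hev : (fun t => (pdy^[j] u) p.1 t)
        =ᶠ[nhds p.2] (fun t => (dd (0,1))^[j] (fun p : ℝ × ℝ => u p.1 p.2) (p.1, t)) := by
      have hc : ContinuousAt (fun t : ℝ => ((p.1, t) : ℝ × ℝ)) p.2 :=
        (continuous_const.prodMk continuous_id).continuousAt
      filter_upwards [hc.eventually_mem (hB.mem_nhds (by simpa using hp))] with t ht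
      simpa using ih (p.1, t) ht
    rw [hev.deriv_eq]
    have := pdy_eq (X := (dd (0,1))^[j] (fun p : ℝ × ℝ => u p.1 p.2))
      (x := p.1) (y := p.2) (diffAt hB (sm_it hB hu _ j) (by simpa using hp))
    simpa using this

lemma trans_pdx (hX : ContDiffOn ℝ ∞ X B1) {g : ℝ → ℝ → ℝ}
    (hg : ∀ p ∈ B1, g p.1 p.2 = X p) (i : ℕ) :
    ∀ p ∈ B1, (pdx^[i] g) p.1 p.2 = (dd (1,0))^[i] X p := by
  have hB : IsOpen B1 := isOpen_ball
  induction i generalizing g X with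
  | zero => exact hg
  | succ i ih =>
    intro p hp
    rw [Function.iterate_succ_apply', Function.iterate_succ_apply']
    show deriv (fun t => (pdx^[i] g) t p.2) p.1 = _
    have hev : (fun t => (pdx^[i] g) t p.2)
        =ᶠ[nhds p.1] (fun t => (dd (1,0))^[i] X (t, p.2)) := by
      have hc : ContinuousAt (fun t : ℝ => ((t, p.2) : ℝ × ℝ)) p.1 :=
        (continuous_id.prodMk continuous_const).continuousAt
      filter_upwards [hc.eventually_mem (hB.mem_nhds (by simpa using hp))] with t ht
      simpa using ih hX hg (t, p.2) ht
    rw [hev.deriv_eq]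
    have := pdx_eq (X := (dd (1,0))^[i] X) (x := p.1) (y := p.2)
      (diffAt hB (sm_it hB hX _ i) (by simpa using hp))
    simpa using this

lemma trans_pd {u : ℝ → ℝ → ℝ}
    (hu : ContDiffOn ℝ ∞ (fun p : ℝ × ℝ => u p.1 p.2) B1) (i j : ℕ) :
    ∀ p ∈ B1, pd u i j p.1 p.2 = wd i j (fun p : ℝ × ℝ => u p.1 p.2) p := by
  have hB : IsOpen B1 := isOpen_ball
  exact trans_pdx (sm_it hB hu _ j) (trans_pdy hu j) i

lemma fderiv_decomp {p : ℝ × ℝ} (hX : DifferentiableAt ℝ X p) (v : ℝ × ℝ) :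
    fderiv ℝ X p v = v.1 * dd (1,0) X p + v.2 * dd (0,1) X p := by
  have hv : v = v.1 • ((1:ℝ),(0:ℝ)) + v.2 • ((0:ℝ),(1:ℝ)) := by
    simp [Prod.ext_iff]
  calc fderiv ℝ X p v = fderiv ℝ X p (v.1 • ((1:ℝ),(0:ℝ)) + v.2 • ((0:ℝ),(1:ℝ))) := by
        rw [← hv]
    _ = _ := by
        rw [map_add, map_smul, map_smul]
        simp [dd, smul_eq_mul]

lemma master (N : ℕ) :
    ∀ (H : ℝ × ℝ → ℝ) (r : ℝ), 0 < r → ContDiffOn ℝ ∞ H (ball 0 r) →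
    (∀ a b, a + b ≤ N → wd a b H 0 = 0) →
    ∃ C : ℝ, 0 < C ∧ ∀ p : ℝ × ℝ, ‖p‖ ≤ r/2 → |H p| ≤ C * ‖p‖^(N+1) := by
  induction N with
  | zero =>
    intro H r hr hH hV
    have hs : IsOpen (ball (0:ℝ×ℝ) r) := isOpen_ball
    have hsub : closedBall (0:ℝ×ℝ) (r/2) ⊆ ball 0 r :=
      closedBall_subset_ball (by linarith)
    have hcont : ContinuousOn (fderiv ℝ H) (ball (0:ℝ×ℝ) r) :=
      hH.continuousOn_fderiv_of_isOpen hs (WithTop.coe_le_coe.mpr le_top)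
    obtain ⟨M, hM⟩ := (isCompact_closedBall (0:ℝ×ℝ) (r/2)).exists_bound_of_continuousOn
      (hcont.mono hsub)
    refine ⟨max M 0 + 1, by positivity, fun p hp => ?_⟩
    have hp' : p ∈ closedBall (0:ℝ×ℝ) (r/2) := by
      simpa [Metric.mem_closedBall, dist_zero_right] using hp
    have h0' : (0:ℝ×ℝ) ∈ closedBall (0:ℝ×ℝ) (r/2) := mem_closedBall_self (by linarith)
    have hH0 : H 0 = 0 := hV 0 0 le_rfl
    have := (convex_closedBall (0:ℝ×ℝ) (r/2)).norm_image_sub_le_of_norm_fderiv_le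
      (f := H) (C := max M 0 + 1) (x := 0) (y := p)
      (fun q hq => diffAt hs hH (hsub hq))
      (fun q hq => le_trans (hM q hq) (by linarith [le_max_left M 0]))
      h0' hp'
    rw [hH0, sub_zero, sub_zero] at this
    simpa [pow_one] using this
  | succ N ih =>
    intro H r hr hH hV
    have hs : IsOpen (ball (0:ℝ×ℝ) r) := isOpen_ball
    have h0 : (0:ℝ×ℝ) ∈ ball (0:ℝ×ℝ) r := mem_ball_self hr
    obtain ⟨C1, hC1, hB1⟩ := ih (dd (1,0) H) r hr (sm_dd hs hH _)
      (fun a b hab => by rw [wd_d1 hs hH a b 0 h0]; exact hV (a+1) b (by omega))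
    obtain ⟨C2, hC2, hB2⟩ := ih (dd (0,1) H) r hr (sm_dd hs hH _)
      (fun a b hab => by rw [wd_d2]; exact hV a (b+1) (by omega))
    refine ⟨C1 + C2, by positivity, fun p hp => ?_⟩
    have hsub : closedBall (0:ℝ×ℝ) ‖p‖ ⊆ ball 0 r := by
      apply closedBall_subset_ball; linarith
    have hbound : ∀ q ∈ closedBall (0:ℝ×ℝ) ‖p‖,
        ‖fderiv ℝ H q‖ ≤ (C1 + C2) * ‖p‖^(N+1) := by
      intro q hq
      have hqn : ‖q‖ ≤ ‖p‖ := by simpa [dist_zero_right] using hq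
      have hq2 : ‖q‖ ≤ r/2 := le_trans hqn hp
      apply ContinuousLinearMap.opNorm_le_bound _ (by positivity)
      intro v
      rw [fderiv_decomp (diffAt hs hH (hsub hq)) v]
      have e1 : |dd (1,0) H q| ≤ C1 * ‖p‖^(N+1) :=
        le_trans (hB1 q hq2) (by
          have : ‖q‖^(N+1) ≤ ‖p‖^(N+1) := pow_le_pow_left₀ (norm_nonneg q) hqn _
          nlinarith)
      have e2 : |dd (0,1) H q| ≤ C2 * ‖p‖^(N+1) :=
        le_trans (hB2 q hq2) (by
          have : ‖q‖^(N+1) ≤ ‖p‖^(N+1) := pow_le_pow_left₀ (norm_nonneg q) hqn _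
          nlinarith)
      have hv1 : |v.1| ≤ ‖v‖ := norm_fst_le v
      have hv2 : |v.2| ≤ ‖v‖ := norm_snd_le v
      calc ‖v.1 * dd (1,0) H q + v.2 * dd (0,1) H q‖
          ≤ |v.1 * dd (1,0) H q| + |v.2 * dd (0,1) H q| := abs_add_le _ _
        _ = |v.1| * |dd (1,0) H q| + |v.2| * |dd (0,1) H q| := by rw [abs_mul, abs_mul]
        _ ≤ ‖v‖ * (C1 * ‖p‖^(N+1)) + ‖v‖ * (C2 * ‖p‖^(N+1)) :=
            add_le_add (mul_le_mul hv1 e1 (abs_nonneg _) (norm_nonneg v))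
              (mul_le_mul hv2 e2 (abs_nonneg _) (norm_nonneg v))
        _ = (C1 + C2) * ‖p‖^(N+1) * ‖v‖ := by ring
    have hH0 : H 0 = 0 := hV 0 0 (by omega)
    have := (convex_closedBall (0:ℝ×ℝ) ‖p‖).norm_image_sub_le_of_norm_fderiv_le
      (f := H) (C := (C1+C2) * ‖p‖^(N+1)) (x := 0) (y := p)
      (fun q hq => diffAt hs hH (hsub hq)) hbound
      (mem_closedBall_self (norm_nonneg p)) (by simp [Metric.mem_closedBall])
    rw [hH0, sub_zero, sub_zero] at this
    calc |H p| ≤ (C1 + C2) * ‖p‖^(N+1) * ‖p‖ := this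
      _ = (C1 + C2) * ‖p‖^(N+2) := by ring

noncomputable def Lc : (ℝ × ℝ) →L[ℝ] ℂ :=
  (Complex.ofRealCLM.comp (ContinuousLinearMap.fst ℝ ℝ ℝ)) +
  ((ContinuousLinearMap.snd ℝ ℝ ℝ).smulRight Complex.I)

lemma Lc_apply (p : ℝ × ℝ) : Lc p = (p.1 : ℂ) + (p.2 : ℂ) * Complex.I := by
  simp [Lc, Complex.real_smul]

noncomputable def Qc (c : ℂ) (m : ℕ) : ℝ × ℝ → ℝ := fun p => (c * (Lc p)^m).re

lemma Qc_congr {c c' : ℂ} {m k : ℕ} (h : c = c') (hm : m = k) : Qc c m = Qc c' k := by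
  rw [h, hm]

lemma sm_Qc (c : ℂ) (m : ℕ) : ContDiff ℝ ∞ (Qc c m) := by
  have : Qc c m = Complex.reCLM ∘ (fun p : ℝ × ℝ => c * (Lc p)^m) := rfl
  rw [this]
  exact Complex.reCLM.contDiff.comp (contDiff_const.mul (Lc.contDiff.pow m))

lemma Qc_zero_eval (c : ℂ) (m : ℕ) (hm : 1 ≤ m) : Qc c m 0 = 0 := by
  simp [Qc, zero_pow (by omega : m ≠ 0)]

lemma Qc_zero_eval0 (c : ℂ) : Qc c 0 0 = c.re := by simp [Qc]

lemma dd_Qc (c : ℂ) (m : ℕ) (v : ℝ × ℝ) :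
    dd v (Qc c (m+1)) = Qc ((m+1 : ℂ) * c * (Lc v)) m := by
  funext p
  have h1 : HasDerivAt (fun w : ℂ => c * w^(m+1)) (c * ((m+1 : ℂ) * (Lc p)^m)) (Lc p) := by
    simpa using (hasDerivAt_pow (m+1) (Lc p)).const_mul c
  have h2 : HasFDerivAt (fun q : ℝ × ℝ => c * (Lc q)^(m+1))
      (((ContinuousLinearMap.smulRight (1 : ℂ →L[ℂ] ℂ)
        (c * ((m+1 : ℂ) * (Lc p)^m))).restrictScalars ℝ).comp Lc) p :=
    ((h1.hasFDerivAt.restrictScalars ℝ).comp p Lc.hasFDerivAt)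
  have h3 : HasFDerivAt (Qc c (m+1))
      (Complex.reCLM.comp ((((ContinuousLinearMap.smulRight (1 : ℂ →L[ℂ] ℂ)
        (c * ((m+1 : ℂ) * (Lc p)^m))).restrictScalars ℝ).comp Lc))) p :=
    Complex.reCLM.hasFDerivAt.comp p h2
  show fderiv ℝ (Qc c (m+1)) p v = _
  rw [h3.fderiv]
  show (Lc v • (c * ((m+1 : ℂ) * (Lc p)^m))).re = ((m+1 : ℂ) * c * Lc v * (Lc p)^m).re
  congr 1
  simp [smul_eq_mul]
  ring

lemma Lc_e1 : Lc ((1:ℝ),(0:ℝ)) = 1 := by simp [Lc_apply]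
lemma Lc_e2 : Lc ((0:ℝ),(1:ℝ)) = Complex.I := by simp [Lc_apply]

lemma it2_Qc (b : ℕ) : ∀ (c : ℂ) (m : ℕ), b ≤ m →
    (dd (0,1))^[b] (Qc c m) = Qc (c * Complex.I^b * (m.descFactorial b : ℂ)) (m - b) := by
  induction b with
  | zero =>
    intro c m _
    rw [Function.iterate_zero_apply]
    exact (Qc_congr (by simp) (by omega)).symm
  | succ b ih =>
    intro c m hbm
    obtain ⟨m', rfl⟩ : ∃ m', m = m' + 1 := ⟨m - 1, by omega⟩
    rw [Function.iterate_succ_apply, dd_Qc, Lc_e2, ih _ m' (by omega)]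
    apply Qc_congr
    · rw [Nat.succ_descFactorial_succ]
      push_cast
      ring
    · omega

lemma it1_Qc (a : ℕ) : ∀ (c : ℂ) (m : ℕ), a ≤ m →
    (dd (1,0))^[a] (Qc c m) = Qc (c * (m.descFactorial a : ℂ)) (m - a) := by
  induction a with
  | zero =>
    intro c m _
    rw [Function.iterate_zero_apply]
    exact (Qc_congr (by simp) (by omega)).symm
  | succ a ih =>
    intro c m ham
    obtain ⟨m', rfl⟩ : ∃ m', m = m' + 1 := ⟨m - 1, by omega⟩
    rw [Function.iterate_succ_apply, dd_Qc, Lc_e1, ih _ m' (by omega)]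
    apply Qc_congr
    · rw [Nat.succ_descFactorial_succ]
      push_cast
      ring
    · omega

lemma wd_Qc (a b : ℕ) (c : ℂ) (n : ℕ) (h : a + b ≤ n) :
    wd a b (Qc c n) = Qc (c * Complex.I^b * (n.descFactorial b : ℂ)
      * ((n-b).descFactorial a : ℂ)) (n - b - a) := by
  unfold wd
  rw [it2_Qc b c n (by omega), it1_Qc a _ (n-b) (by omega)]

lemma wd_Qc_zero_lt (a b : ℕ) (c : ℂ) (n : ℕ) (h : a + b < n) :
    wd a b (Qc c n) 0 = 0 := by
  rw [wd_Qc a b c n (by omega)]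
  exact Qc_zero_eval _ _ (by omega)

lemma wd_Qc_zero_eq (a b : ℕ) (c : ℂ) (n : ℕ) (h : a + b = n) :
    wd a b (Qc c n) 0 = (n.factorial : ℝ) * (c * Complex.I^b).re := by
  rw [wd_Qc a b c n (by omega), show n - b - a = 0 by omega, Qc_zero_eval0]
  have hd : (n.descFactorial b) * ((n-b).descFactorial a) = n.factorial := by
    have h1 : (n-b).descFactorial a = (n-b).factorial := by
      rw [show a = n - b by omega]; exact Nat.descFactorial_self _
    rw [h1, mul_comm]
    exact Nat.factorial_mul_descFactorial (by omega)
  have : (c * Complex.I^b * (n.descFactorial b : ℂ) * ((n-b).descFactorial a : ℂ))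
      = (n.factorial : ℂ) * (c * Complex.I^b) := by
    rw [mul_assoc, ← Nat.cast_mul, hd]; ring
  rw [this]
  simp [Complex.mul_re]


end PDEInfra

/-- Taylor expansion `n!(u(x,y) - u(0,0)) = α Re(zⁿ) + β Im(zⁿ) + R(x,y)`
with `|R(x,y)| ≤ C(|x|^(n+1) + |y|^(n+1))`, for a solution whose derivatives of orders
`1,…,n-1` vanish at the origin; moreover `(α,β) ≠ (0,0)` if some `n`-th derivative is nonzero. -/
theorem taylor_expansion_harmonic_polynomial
    (u : ℝ → ℝ → ℝ) (f : ℝ → ℝ)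
    (hu : ContDiffOn ℝ (⊤ : ℕ∞) (fun p : ℝ × ℝ => u p.1 p.2) B1)
    (hf : ContDiff ℝ (⊤ : ℕ∞) f)
    (hpde : ∀ x y : ℝ, (x, y) ∈ B1 → -(pd u 2 0 x y + pd u 0 2 x y) = f (u x y))
    (n : ℕ) (hn3 : 3 ≤ n)
    (hvan : ∀ m k : ℕ, 1 ≤ m → m ≤ n - 1 → k ≤ m → pd u (m - k) k 0 0 = 0) :
    (∃ C : ℝ, 0 < C ∧ ∃ δ : ℝ, 0 < δ ∧ ∀ x y : ℝ, x ^ 2 + y ^ 2 < δ ^ 2 →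
      |(n.factorial : ℝ) * (u x y - u 0 0)
        - (pd u n 0 0 0 * ReZ n x y + pd u (n - 1) 1 0 0 * ImZ n x y)|
        ≤ C * (|x| ^ (n + 1) + |y| ^ (n + 1))) ∧
    ((∃ k : ℕ, k ≤ n ∧ pd u (n - k) k 0 0 ≠ 0) →
      ¬ (pd u n 0 0 0 = 0 ∧ pd u (n - 1) 1 0 0 = 0)) := by
  have hB : IsOpen B1 := isOpen_ball
  have h0B : (0:ℝ×ℝ) ∈ B1 := mem_ball_self one_pos
  have hu' : ContDiffOn ℝ ∞ (fun p : ℝ × ℝ => u p.1 p.2) B1 := hu.of_le (by simp)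
  set F : ℝ × ℝ → ℝ := fun p => u p.1 p.2 with hFdef
  have hf' : ContDiff ℝ ∞ f := hf.of_le (by simp)
  have htr : ∀ i j, ∀ p ∈ B1, pd u i j p.1 p.2 = wd i j F p := fun i j => trans_pd hu' i j
  have htr0 : ∀ i j, pd u i j 0 0 = wd i j F 0 := by
    intro i j
    have := htr i j 0 h0B
    simpa using this
  have hvanW : ∀ a b, 1 ≤ a + b → a + b ≤ n - 1 → wd a b F 0 = 0 := by
    intro a b h1 h2
    have h3 := hvan (a+b) b h1 h2 (by omega)
    rw [show a + b - b = a from by omega] at h3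
    rw [← htr0 a b]; exact h3
  have h00B : ((0:ℝ),(0:ℝ)) ∈ B1 := by
    show ((0:ℝ),(0:ℝ)) ∈ Metric.ball _ 1
    simp [Prod.norm_def]
  have hf0 : f (u 0 0) = 0 := by
    have h2 := hpde 0 0 h00B
    have e1 : pd u 2 0 0 0 = 0 := by
      have := hvan 2 0 (by omega) (by omega) (by omega); simpa using this
    have e2 : pd u 0 2 0 0 = 0 := by
      have := hvan 2 2 (by omega) (by omega) (by omega); simpa using this
    rw [e1, e2] at h2
    linarith
  have hfFw : ∀ a b, a + b ≤ n - 2 → wd a b (fun q => f (F q)) 0 = 0 := by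
    intro a b hab
    rcases Nat.eq_zero_or_pos (a+b) with h|h
    · obtain ⟨rfl, rfl⟩ : a = 0 ∧ b = 0 := by omega
      show f (F 0) = 0
      exact hf0
    · exact Vcomp hB h0B (n-2) hf' hu'
        (fun a b h1 h2 => hvanW a b h1 (by omega)) a b h hab
  have hrec : ∀ j, j + 2 ≤ n → wd (n-(j+2)) (j+2) F 0 = - wd (n-j) j F 0 := by
    intro j hj
    set a := n - 2 - j with hadef
    have hab : a + j ≤ n - 2 := by omega
    have hGadd : wd a j (fun q => wd 2 0 F q + wd 0 2 F q) 0
        = wd a j (wd 2 0 F) 0 + wd a j (wd 0 2 F) 0 :=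
      wd_add hB a j (sm_wd hB hu' 2 0) (sm_wd hB hu' 0 2) 0 h0B
    have e20 : wd 2 0 F = dd (1,0) (dd (1,0) F) := by
      show (dd (1,0))^[2] ((dd (0,1))^[0] F) = _
      simp only [Function.iterate_zero_apply]
      rw [show (2:ℕ) = 1 + 1 from rfl, Function.iterate_add_apply]
      simp
    have e02 : wd 0 2 F = dd (0,1) (dd (0,1) F) := by
      show (dd (1,0))^[0] ((dd (0,1))^[2] F) = _
      simp only [Function.iterate_zero_apply]
      rw [show (2:ℕ) = 1 + 1 from rfl, Function.iterate_add_apply]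
      simp
    have w20 : wd a j (wd 2 0 F) 0 = wd (a+2) j F 0 := by
      rw [e20, wd_d1 hB (sm_dd hB hu' _) a j 0 h0B, wd_d1 hB hu' (a+1) j 0 h0B]
    have w02 : wd a j (wd 0 2 F) 0 = wd a (j+2) F 0 := by
      rw [e02, wd_d2, wd_d2]
    have hGpde : ∀ q ∈ B1, (wd 2 0 F) q + (wd 0 2 F) q = (-1:ℝ) * f (F q) := by
      intro q hq
      have h2 := hpde q.1 q.2 (by simpa using hq)
      rw [← htr 2 0 q hq, ← htr 0 2 q hq]
      linarith
    have hneg : wd a j (fun q => wd 2 0 F q + wd 0 2 F q) 0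
        = (-1) * wd a j (fun q => f (F q)) 0 := by
      rw [wd_congr hB a j hGpde 0 h0B]
      exact wd_cmul hB a j (-1) (hf'.comp_contDiffOn hu') 0 h0B
    have hzero : wd (a+2) j F 0 + wd a (j+2) F 0 = 0 := by
      rw [← w20, ← w02, ← hGadd, hneg, hfFw a j hab, mul_zero]
    rw [show n - (j+2) = a from by omega, show n - j = a + 2 from by omega]
    linarith
  have hkey : ∀ j, j ≤ n → wd (n-j) j F 0
      = pd u n 0 0 0 * (Complex.I ^ j).re + pd u (n-1) 1 0 0 * (Complex.I ^ j).im := by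
    intro j
    induction j using Nat.strong_induction_on with
    | _ j ih =>
      intro hj
      match j, ih with
      | 0, _ =>
        simp only [Nat.sub_zero, pow_zero, Complex.one_re, Complex.one_im, mul_one,
          mul_zero, add_zero]
        exact (htr0 n 0).symm
      | 1, _ =>
        simp only [pow_one, Complex.I_re, Complex.I_im, mul_one, mul_zero, zero_add]
        exact (htr0 (n-1) 1).symm
      | (j'+2), ih =>
        have h1 := hrec j' (by omega)
        have h2 := ih j' (by omega) (by omega)
        rw [h1, h2]
        have hI : Complex.I ^ (j'+2) = - Complex.I ^ j' := by
          rw [pow_add, Complex.I_sq]; ring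
        rw [hI]
        simp only [Complex.neg_re, Complex.neg_im]
        ring
  constructor
  · -- Taylor expansion bound
    have hReZ : ∀ q : ℝ × ℝ, ReZ n q.1 q.2 = Qc 1 n q := by
      intro q; simp [ReZ, Qc, Lc_apply]
    have hImZ : ∀ q : ℝ × ℝ, ImZ n q.1 q.2 = Qc (-Complex.I) n q := by
      intro q
      simp only [ImZ, Qc, Lc_apply]
      simp [Complex.mul_re]
    set α := pd u n 0 0 0 with hαdef
    set β := pd u (n-1) 1 0 0 with hβdef
    set h : ℝ × ℝ → ℝ := fun p => (n.factorial : ℝ) * (u p.1 p.2 - u 0 0)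
      - (α * ReZ n p.1 p.2 + β * ImZ n p.1 p.2) with hhdef
    have hsX1 : ContDiffOn ℝ ∞ (fun q : ℝ×ℝ => F q + (-(u 0 0))) B1 := hu'.add contDiffOn_const
    have hsX2 : ContDiffOn ℝ ∞ (fun q : ℝ×ℝ => (n.factorial:ℝ) * (F q + (-(u 0 0)))) B1 :=
      contDiffOn_const.mul hsX1
    have hsP1 : ContDiffOn ℝ ∞ (Qc 1 n) B1 := (sm_Qc 1 n).contDiffOn
    have hsP2 : ContDiffOn ℝ ∞ (Qc (-Complex.I) n) B1 := (sm_Qc _ n).contDiffOn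
    have hsY1 : ContDiffOn ℝ ∞ (fun q : ℝ×ℝ => (-α) * Qc 1 n q) B1 := contDiffOn_const.mul hsP1
    have hsY2 : ContDiffOn ℝ ∞ (fun q : ℝ×ℝ => (-β) * Qc (-Complex.I) n q) B1 :=
      contDiffOn_const.mul hsP2
    have hsY3 : ContDiffOn ℝ ∞
        (fun q : ℝ×ℝ => (-α) * Qc 1 n q + (-β) * Qc (-Complex.I) n q) B1 := hsY1.add hsY2
    have hdec : ∀ q ∈ B1, h q = (n.factorial:ℝ) * (F q + (-(u 0 0)))
        + ((-α) * Qc 1 n q + (-β) * Qc (-Complex.I) n q) := by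
      intro q _
      rw [hhdef]
      simp only [← hReZ q, ← hImZ q, hFdef]
      ring
    have hsh : ContDiffOn ℝ ∞ h B1 := (hsX2.add hsY3).congr hdec
    have hWh : ∀ a b, a + b ≤ n → wd a b h 0 = 0 := by
      intro a b hab
      rcases Nat.eq_zero_or_pos (a+b) with hz|hpos
      · obtain ⟨rfl, rfl⟩ : a = 0 ∧ b = 0 := by omega
        show h 0 = 0
        have hz1 : ReZ n 0 0 = 0 := by simp [ReZ, zero_pow (show n ≠ 0 by omega)]
        have hz2 : ImZ n 0 0 = 0 := by simp [ImZ, zero_pow (show n ≠ 0 by omega)]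
        rw [hhdef]
        simp only [Prod.fst_zero, Prod.snd_zero, hz1, hz2]
        ring
      · have step1 : wd a b h 0 = wd a b (fun q => (n.factorial:ℝ) * (F q + (-(u 0 0)))
            + ((-α) * Qc 1 n q + (-β) * Qc (-Complex.I) n q)) 0 :=
          wd_congr hB a b hdec 0 h0B
        have step2 : wd a b (fun q => (n.factorial:ℝ) * (F q + (-(u 0 0)))
            + ((-α) * Qc 1 n q + (-β) * Qc (-Complex.I) n q)) 0
            = wd a b (fun q => (n.factorial:ℝ) * (F q + (-(u 0 0)))) 0
              + (wd a b (fun q => (-α) * Qc 1 n q) 0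
                + wd a b (fun q => (-β) * Qc (-Complex.I) n q) 0) := by
          rw [wd_add hB a b hsX2 hsY3 0 h0B, wd_add hB a b hsY1 hsY2 0 h0B]
        have step3 : wd a b (fun q => (n.factorial:ℝ) * (F q + (-(u 0 0)))) 0
            = (n.factorial:ℝ) * (wd a b F 0 + 0) := by
          rw [wd_cmul hB a b _ hsX1 0 h0B, wd_add hB a b hu' contDiffOn_const 0 h0B,
            wd_const a b hpos]
        have step4 : wd a b (fun q => (-α) * Qc 1 n q) 0 = (-α) * wd a b (Qc 1 n) 0 :=
          wd_cmul hB a b _ hsP1 0 h0B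
        have step5 : wd a b (fun q => (-β) * Qc (-Complex.I) n q) 0
            = (-β) * wd a b (Qc (-Complex.I) n) 0 :=
          wd_cmul hB a b _ hsP2 0 h0B
        rcases Nat.lt_or_ge (a+b) n with hlt|hge
        · rw [step1, step2, step3, step4, step5, hvanW a b hpos (by omega),
            wd_Qc_zero_lt a b _ n hlt, wd_Qc_zero_lt a b _ n hlt]
          ring
        · have heq : a + b = n := by omega
          rw [step1, step2, step3, step4, step5,
            wd_Qc_zero_eq a b _ n heq, wd_Qc_zero_eq a b _ n heq,
            show a = n - b from by omega, hkey b (by omega)]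
          have e2 : ((-Complex.I) * Complex.I^b).re = (Complex.I^b).im := by
            simp [Complex.mul_re]
          rw [one_mul, e2]
          ring
    obtain ⟨C, hC, hbd⟩ := master n h 1 one_pos (by exact hsh) hWh
    refine ⟨C, hC, 1/2, by norm_num, ?_⟩
    intro x y hxy
    have hx : |x| ≤ 1/2 := by nlinarith [sq_abs x, sq_abs y, abs_nonneg x, abs_nonneg y, sq_nonneg y]
    have hy : |y| ≤ 1/2 := by nlinarith [sq_abs x, sq_abs y, abs_nonneg x, abs_nonneg y, sq_nonneg x]
    have hnorm : ‖((x,y):ℝ×ℝ)‖ ≤ 1/2 := by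
      rw [Prod.norm_def]
      apply max_le
      · rw [Real.norm_eq_abs]; linarith
      · rw [Real.norm_eq_abs]; linarith
    have hb := hbd (x,y) hnorm
    have hle : ‖((x,y):ℝ×ℝ)‖^(n+1) ≤ |x|^(n+1) + |y|^(n+1) := by
      rw [Prod.norm_def]
      rcases le_total (‖x‖) (‖y‖) with hc|hc
      · rw [max_eq_right hc]
        simp only [Real.norm_eq_abs]
        exact le_add_of_nonneg_left (by positivity)
      · rw [max_eq_left hc]
        simp only [Real.norm_eq_abs]
        exact le_add_of_nonneg_right (by positivity)
    show |h (x,y)| ≤ C * (|x| ^ (n + 1) + |y| ^ (n + 1))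
    calc |h (x,y)| ≤ C * ‖((x,y):ℝ×ℝ)‖^(n+1) := hb
      _ ≤ C * (|x|^(n+1) + |y|^(n+1)) := mul_le_mul_of_nonneg_left hle (le_of_lt hC)
  · rintro ⟨k, hk, hne⟩ ⟨hα, hβ⟩
    apply hne
    have hk2 := hkey k hk
    rw [htr0 (n-k) k, hk2, hα, hβ]
    ring
end

section
/- Let P ≠ 0 be a real number, let g be a C⁴ real function defined on an open interval containing |P|, and let u(x,y) = g(√(x² + (y-P)²)) be the associated radial function centered at (0,P). Suppose u satisfies -Δu = f(u) in a neighborhood of (0,0) and g'(|P|) = 0 (so (0,0) is a critical point of u lying on a critical circle). Then u_yy(0,0) = -f(u(0,0)), u_xxx(0,0) = 0, u_xxy(0,0) = f(u(0,0))/P, u_xxxx(0,0) = -3 f(u(0,0))/P², and consequently (u_xxy(0,0))² = f(u(0,0))²/P² = u_yy(0,0)·u_xxxx(0,0)/3. -/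
open Filter Metric Set

theorem pdx_iter (v : ℝ → ℝ → ℝ) (n : ℕ) (x y : ℝ) :
    (pdx^[n] v) x y = deriv^[n] (fun t => v t y) x := by
  induction n generalizing x with
  | zero => simp
  | succ n ih =>
    rw [Function.iterate_succ_apply', Function.iterate_succ_apply']
    show deriv (fun t => (pdx^[n] v) t y) x = _
    congr 1
    funext t
    exact ih t

theorem pdy_iter (v : ℝ → ℝ → ℝ) (n : ℕ) (x y : ℝ) :
    (pdy^[n] v) x y = deriv^[n] (fun s => v x s) y := by
  induction n generalizing y with
  | zero => simp
  | succ n ih =>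
    rw [Function.iterate_succ_apply', Function.iterate_succ_apply']
    show deriv (fun s => (pdy^[n] v) x s) y = _
    congr 1
    funext s
    exact ih s


set_option maxHeartbeats 1000000 in
/-- derivatives at `(0,0)` of a radial solution centered at `(0,P)`. -/
theorem radial_derivatives
    (P : ℝ) (hP : P ≠ 0)
    (g : ℝ → ℝ) (a b : ℝ) (hab : |P| ∈ Set.Ioo a b)
    (hg : ContDiffOn ℝ 4 g (Set.Ioo a b))
    (u : ℝ → ℝ → ℝ)
    (hu : u = fun x y => g (Real.sqrt (x ^ 2 + (y - P) ^ 2)))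
    (f : ℝ → ℝ) (hf : ContDiff ℝ (⊤ : ℕ∞) f)
    (hpde : ∃ δ : ℝ, 0 < δ ∧ ∀ x y : ℝ, x ^ 2 + y ^ 2 < δ ^ 2 →
      -(pd u 2 0 x y + pd u 0 2 x y) = f (u x y))
    (hg' : deriv g |P| = 0) :
    pd u 0 2 0 0 = -f (u 0 0) ∧
    pd u 3 0 0 0 = 0 ∧
    pd u 2 1 0 0 = f (u 0 0) / P ∧
    pd u 4 0 0 0 = -3 * f (u 0 0) / P ^ 2 ∧
    (pd u 2 1 0 0) ^ 2 = f (u 0 0) ^ 2 / P ^ 2 ∧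
    (pd u 2 1 0 0) ^ 2 = pd u 0 2 0 0 * pd u 4 0 0 0 / 3 := by
  obtain ⟨δ, hδ, hPDE⟩ := hpde
  have hq0 : (0:ℝ) < |P| := abs_pos.mpr hP
  set q : ℝ := |P| with hqdef
  have hq2 : q ^ 2 = P ^ 2 := sq_abs P
  set g1 : ℝ → ℝ := deriv g with hg1def
  set g2 : ℝ → ℝ := deriv g1 with hg2def
  set g3 : ℝ → ℝ := deriv g2 with hg3def
  have hSopen : IsOpen (Set.Ioo a b) := isOpen_Ioo
  have hgc1 : ContDiffOn ℝ 3 g1 (Set.Ioo a b) := hg.deriv_of_isOpen hSopen (by norm_num)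
  have hgc2 : ContDiffOn ℝ 2 g2 (Set.Ioo a b) := hgc1.deriv_of_isOpen hSopen (by norm_num)
  have hgc3 : ContDiffOn ℝ 1 g3 (Set.Ioo a b) := hgc2.deriv_of_isOpen hSopen (by norm_num)
  have hd : ∀ (F : ℝ → ℝ) (n : WithTop ℕ∞), ContDiffOn ℝ n F (Set.Ioo a b) → 1 ≤ n →
      ∀ x ∈ Set.Ioo a b, HasDerivAt F (deriv F x) x := by
    intro F n hF hn x hx
    exact ((hF.differentiableOn (zero_lt_one.trans_le hn).ne').differentiableAt (hSopen.mem_nhds hx)).hasDerivAt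
  have hdg : ∀ x ∈ Set.Ioo a b, HasDerivAt g (g1 x) x := hd g 4 hg (by norm_num)
  have hdg1 : ∀ x ∈ Set.Ioo a b, HasDerivAt g1 (g2 x) x := hd g1 3 hgc1 (by norm_num)
  have hdg2 : ∀ x ∈ Set.Ioo a b, HasDerivAt g2 (g3 x) x := hd g2 2 hgc2 (by norm_num)
  have hdg3 : ∀ x ∈ Set.Ioo a b, HasDerivAt g3 (deriv g3 x) x := hd g3 1 hgc3 le_rfl
  -- the radius function along y = 0
  obtain ⟨h, hhdef⟩ : ∃ h : ℝ → ℝ, ∀ x, h x = Real.sqrt (x ^ 2 + P ^ 2) := ⟨_, fun _ => rfl⟩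
  have hpos : ∀ x : ℝ, 0 < x ^ 2 + P ^ 2 := fun x => by positivity
  have hhpos : ∀ x, 0 < h x := fun x => by rw [hhdef]; exact Real.sqrt_pos.mpr (hpos x)
  have hhne : ∀ x, h x ≠ 0 := fun x => (hhpos x).ne'
  have hhsq : ∀ x, h x ^ 2 = x ^ 2 + P ^ 2 := fun x => by
    rw [hhdef]; exact Real.sq_sqrt (hpos x).le
  have hh0 : h 0 = q := by rw [hhdef]; simp [Real.sqrt_sq_eq_abs]; exact hqdef.symm
  have hh' : ∀ x : ℝ, HasDerivAt h (x / h x) x := by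
    intro x
    have h1 : HasDerivAt (fun y : ℝ => y ^ 2 + P ^ 2) (2 * x) x := by
      simpa using (hasDerivAt_pow 2 x).add_const (P ^ 2)
    have h2 := (Real.hasDerivAt_sqrt (hpos x).ne').comp x h1
    have hfun : h = fun y => Real.sqrt (y ^ 2 + P ^ 2) := funext hhdef
    rw [hfun]
    convert h2 using 1
    · rfl
    · rfl
    · rfl
    simp only
    have hne : Real.sqrt (x ^ 2 + P ^ 2) ≠ 0 := by rw [← hhdef]; exact hhne x
    field_simp
  have hcont_h : Continuous h := continuous_iff_continuousAt.mpr fun x => (hh' x).continuousAt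
  set U : Set ℝ := h ⁻¹' (Set.Ioo a b) with hUdef
  have hUopen : IsOpen U := hSopen.preimage hcont_h
  have hU0 : (0:ℝ) ∈ U := by
    simp only [hUdef, Set.mem_preimage, hh0]
    exact hab
  have hUmem : ∀ x ∈ U, h x ∈ Set.Ioo a b := fun x hx => hx
  -- derivative of w = x / h x
  have hw' : ∀ x : ℝ, HasDerivAt (fun t => t / h t) (P ^ 2 / h x ^ 3) x := by
    intro x
    have := (hasDerivAt_id x).fun_div (hh' x) (hhne x)
    convert this using 1
    · rfl
    · rfl
    · rfl
    have h1 : 1 * h x - x * (x / h x) = P ^ 2 / h x := by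
      field_simp [hhne x]
      linear_combination hhsq x
    show P ^ 2 / h x ^ 3 = (1 * h x - id x * (x / h x)) / h x ^ 2
    rw [id, h1, div_div]
    ring_nf
  -- derivative of v = P^2 / h^3
  have hv' : ∀ x : ℝ, HasDerivAt (fun t => P ^ 2 / h t ^ 3) (-3 * P ^ 2 * x / h x ^ 5) x := by
    intro x
    have hp : HasDerivAt (fun t => h t ^ 3) (3 * h x ^ 2 * (x / h x)) x := by
      simpa using (hh' x).fun_pow 3
    have := (hasDerivAt_const x (P ^ 2)).fun_div hp (pow_ne_zero 3 (hhne x))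
    convert this using 1
    · rfl
    · rfl
    field_simp [hhne x]
    ring
  -- D1
  have hD1 : ∀ x ∈ U, HasDerivAt (fun t => g (h t)) (g1 (h x) * (x / h x)) x := by
    intro x hx
    exact (hdg (h x) (hUmem x hx)).comp x (hh' x)
  -- D2
  have hD2 : ∀ x ∈ U, HasDerivAt (fun t => g1 (h t) * (t / h t))
      (g2 (h x) * (x / h x) ^ 2 + g1 (h x) * (P ^ 2 / h x ^ 3)) x := by
    intro x hx
    have hA : HasDerivAt (fun t => g1 (h t)) (g2 (h x) * (x / h x)) x :=
      (hdg1 (h x) (hUmem x hx)).comp x (hh' x)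
    have := hA.fun_mul (hw' x)
    convert this using 1
    · rfl
    · rfl
    ring
  -- D3
  have hD3 : ∀ x ∈ U, HasDerivAt
      (fun t => g2 (h t) * (t / h t) ^ 2 + g1 (h t) * (P ^ 2 / h t ^ 3))
      (g3 (h x) * (x / h x) ^ 3 + 3 * g2 (h x) * (x / h x) * (P ^ 2 / h x ^ 3)
        + g1 (h x) * (-3 * P ^ 2 * x / h x ^ 5)) x := by
    intro x hx
    have hB : HasDerivAt (fun t => g2 (h t)) (g3 (h x) * (x / h x)) x :=
      (hdg2 (h x) (hUmem x hx)).comp x (hh' x)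
    have hA : HasDerivAt (fun t => g1 (h t)) (g2 (h x) * (x / h x)) x :=
      (hdg1 (h x) (hUmem x hx)).comp x (hh' x)
    have hw2 : HasDerivAt (fun t => (t / h t) ^ 2) (2 * (x / h x) * (P ^ 2 / h x ^ 3)) x := by
      simpa using (hw' x).fun_pow 2
    have := (hB.fun_mul hw2).fun_add (hA.fun_mul (hv' x))
    convert this using 1
    · rfl
    · rfl
    ring
  -- D4 at 0
  have hD4 : HasDerivAt
      (fun t => g3 (h t) * (t / h t) ^ 3 + 3 * g2 (h t) * (t / h t) * (P ^ 2 / h t ^ 3)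
        + g1 (h t) * (-3 * P ^ 2 * t / h t ^ 5))
      (3 * g2 q / P ^ 2) 0 := by
    have hC : HasDerivAt (fun t => g3 (h t)) (deriv g3 (h 0) * (0 / h 0)) 0 :=
      (hdg3 (h 0) (hUmem 0 hU0)).comp 0 (hh' 0)
    have hB : HasDerivAt (fun t => g2 (h t)) (g3 (h 0) * (0 / h 0)) 0 :=
      (hdg2 (h 0) (hUmem 0 hU0)).comp 0 (hh' 0)
    have hA : HasDerivAt (fun t => g1 (h t)) (g2 (h 0) * (0 / h 0)) 0 :=
      (hdg1 (h 0) (hUmem 0 hU0)).comp 0 (hh' 0)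
    have hw3 : HasDerivAt (fun t => (t / h t) ^ 3) (3 * (0 / h 0) ^ 2 * (P ^ 2 / h 0 ^ 3)) 0 := by
      simpa using (hw' 0).fun_pow 3
    have hz : HasDerivAt (fun t => -3 * P ^ 2 * t / h t ^ 5)
        ((-3 * P ^ 2 * h 0 ^ 5 - -3 * P ^ 2 * 0 * (5 * h 0 ^ 4 * (0 / h 0))) / (h 0 ^ 5) ^ 2) 0 := by
      have hp : HasDerivAt (fun t => h t ^ 5) (5 * h 0 ^ 4 * (0 / h 0)) 0 := by
        simpa using (hh' 0).fun_pow 5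
      have hn : HasDerivAt (fun t : ℝ => -3 * P ^ 2 * t) (-3 * P ^ 2) 0 := by
        have := (hasDerivAt_id (0:ℝ)).const_mul (-3 * P ^ 2)
        simp only [mul_one] at this
        exact this
      exact hn.div hp (pow_ne_zero 5 (hhne 0))
    have total := ((hC.fun_mul hw3).fun_add (((hB.const_mul 3).fun_mul (hw' 0)).fun_mul (hv' 0))).fun_add
      (hA.fun_mul hz)
    convert total using 1
    · rfl
    · rfl
    rw [hh0]
    rw [hg']
    rw [show (0:ℝ) / q = 0 by simp]
    rw [← hq2]
    field_simp
    ring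
  -- EqOn machinery
  have derivEq : ∀ v w : ℝ → ℝ, Set.EqOn v w U → Set.EqOn (deriv v) (deriv w) U := by
    intro v w hvw x hx
    exact Filter.EventuallyEq.deriv_eq (Filter.eventuallyEq_of_mem (hUopen.mem_nhds hx) hvw)
  have hGfun : (fun t => u t 0) = fun t => g (h t) := by
    funext t
    rw [hu, hhdef]
    norm_num
  have e1 : Set.EqOn (deriv (fun t => g (h t))) (fun x => g1 (h x) * (x / h x)) U :=
    fun x hx => (hD1 x hx).deriv
  have e2 : Set.EqOn (deriv (deriv (fun t => g (h t))))
      (fun x => g2 (h x) * (x / h x) ^ 2 + g1 (h x) * (P ^ 2 / h x ^ 3)) U := by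
    intro x hx
    rw [derivEq _ _ e1 hx]
    exact (hD2 x hx).deriv
  have e3 : Set.EqOn (deriv (deriv (deriv (fun t => g (h t)))))
      (fun x => g3 (h x) * (x / h x) ^ 3 + 3 * g2 (h x) * (x / h x) * (P ^ 2 / h x ^ 3)
        + g1 (h x) * (-3 * P ^ 2 * x / h x ^ 5)) U := by
    intro x hx
    rw [derivEq _ _ e2 hx]
    exact (hD3 x hx).deriv
  have e4 : deriv (deriv (deriv (deriv (fun t => g (h t))))) 0 = 3 * g2 q / P ^ 2 := by
    rw [derivEq _ _ e3 hU0]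
    exact hD4.deriv
  have iterate_two : ∀ (v : ℝ → ℝ) (x : ℝ), deriv^[2] v x = deriv (deriv v) x := by
    intro v x
    rw [Function.iterate_succ_apply', Function.iterate_one]
  have iterate_three : ∀ (v : ℝ → ℝ) (x : ℝ), deriv^[3] v x = deriv (deriv (deriv v)) x := by
    intro v x
    rw [Function.iterate_succ_apply', Function.iterate_succ_apply', Function.iterate_one]
  have iterate_four : ∀ (v : ℝ → ℝ) (x : ℝ), deriv^[4] v x = deriv (deriv (deriv (deriv v))) x := by
    intro v x
    rw [Function.iterate_succ_apply', Function.iterate_succ_apply',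
      Function.iterate_succ_apply', Function.iterate_one]
  have hpdn : ∀ n : ℕ, pd u n 0 0 0 = deriv^[n] (fun t => g (h t)) 0 := by
    intro n
    have h1 : pd u n 0 0 0 = deriv^[n] (fun t => u t 0) 0 := by
      simp only [pd, Function.iterate_zero_apply]
      exact pdx_iter u n 0 0
    rw [h1, hGfun]
  have hpd20 : pd u 2 0 0 0 = 0 := by
    rw [hpdn 2, iterate_two, e2 hU0]
    simp [hh0, hg']
  have hpd30 : pd u 3 0 0 0 = 0 := by
    rw [hpdn 3, iterate_three, e3 hU0]
    simp [hh0, hg']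
  have hpd40 : pd u 4 0 0 0 = 3 * g2 q / P ^ 2 := by
    rw [hpdn 4, iterate_four]
    exact e4
  -- the y-slice
  obtain ⟨k, hkdef⟩ : ∃ k : ℝ → ℝ, ∀ s, k s = Real.sqrt ((s - P) ^ 2) := ⟨_, fun _ => rfl⟩
  have hk0 : k 0 = q := by
    rw [hkdef, Real.sqrt_sq_eq_abs, zero_sub, abs_neg]
  have hkcont : Continuous k := by
    have : k = fun s => Real.sqrt ((s - P) ^ 2) := funext hkdef
    rw [this]
    exact Real.continuous_sqrt.comp ((continuous_id.sub continuous_const).pow 2)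
  set V : Set ℝ := {s : ℝ | s ≠ P} ∩ k ⁻¹' (Set.Ioo a b) with hVdef
  have hVopen : IsOpen V := (isOpen_compl_singleton).inter (hSopen.preimage hkcont)
  have hV0 : (0:ℝ) ∈ V := by
    constructor
    · show (0:ℝ) ≠ P
      exact fun hc => hP hc.symm
    · simp only [Set.mem_preimage, hk0]
      exact hab
  have hksq : ∀ s, k s ^ 2 = (s - P) ^ 2 := fun s => by
    rw [hkdef]; exact Real.sq_sqrt (sq_nonneg _)
  have hkpos : ∀ s ∈ V, 0 < k s := by
    intro s hs
    rw [hkdef]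
    apply Real.sqrt_pos.mpr
    exact pow_two_pos_of_ne_zero (sub_ne_zero.mpr hs.1)
  have hkne : ∀ s ∈ V, k s ≠ 0 := fun s hs => (hkpos s hs).ne'
  have hk' : ∀ s ∈ V, HasDerivAt k ((s - P) / k s) s := by
    intro s hs
    have hinner : HasDerivAt (fun s : ℝ => (s - P) ^ 2) (2 * (s - P)) s := by
      simpa using ((hasDerivAt_id s).sub_const P).fun_pow 2
    have hne2 : ((s - P) ^ 2 : ℝ) ≠ 0 := pow_ne_zero 2 (sub_ne_zero.mpr hs.1)
    have h2 := (Real.hasDerivAt_sqrt hne2).comp s hinner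
    have hfun : k = fun s => Real.sqrt ((s - P) ^ 2) := funext hkdef
    rw [hfun]
    convert h2 using 1
    · rfl
    · rfl
    · rfl
    simp only
    have hne3 : Real.sqrt ((s - P) ^ 2) ≠ 0 := by rw [← hkdef]; exact hkne s hs
    rw [← hkdef s]
    field_simp
  have hN1 : ∀ s ∈ V, HasDerivAt (fun s => g (k s)) (g1 (k s) * ((s - P) / k s)) s := by
    intro s hs
    exact (hdg (k s) hs.2).comp s (hk' s hs)
  have hN2 : HasDerivAt (fun s => g1 (k s) * ((s - P) / k s)) (g2 q) 0 := by
    have hA : HasDerivAt (fun s => g1 (k s)) (g2 (k 0) * ((0 - P) / k 0)) 0 :=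
      (hdg1 (k 0) hV0.2).comp 0 (hk' 0 hV0)
    have hr : HasDerivAt (fun s : ℝ => s - P) (1 : ℝ) 0 := (hasDerivAt_id 0).sub_const P
    have hrr := hr.fun_div (hk' 0 hV0) (hkne 0 hV0)
    have total := hA.fun_mul hrr
    convert total using 1
    · rfl
    · rfl
    rw [hk0, hg']
    simp only [zero_mul, add_zero]
    rw [mul_assoc, div_mul_div_comm]
    rw [show (0 - P) * (0 - P) = P ^ 2 by ring]
    rw [show q * q = P ^ 2 by rw [← hq2]; ring]
    rw [div_self (pow_ne_zero 2 hP), mul_one]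
  have derivEqV : ∀ v w : ℝ → ℝ, Set.EqOn v w V → Set.EqOn (deriv v) (deriv w) V := by
    intro v w hvw x hx
    exact Filter.EventuallyEq.deriv_eq (Filter.eventuallyEq_of_mem (hVopen.mem_nhds hx) hvw)
  have hKfun : (fun s => u 0 s) = fun s => g (k s) := by
    funext s
    rw [hu, hkdef]
    norm_num
  have f1 : Set.EqOn (deriv (fun s => g (k s))) (fun s => g1 (k s) * ((s - P) / k s)) V :=
    fun s hs => (hN1 s hs).deriv
  have hpd02 : pd u 0 2 0 0 = g2 q := by
    have h1 : pd u 0 2 0 0 = deriv^[2] (fun s => u 0 s) 0 := by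
      simp only [pd, Function.iterate_zero_apply]
      exact pdy_iter u 2 0 0
    rw [h1, hKfun, iterate_two, derivEqV _ _ f1 hV0]
    exact hN2.deriv
  -- mixed derivative
  have hslice : Set.EqOn (fun t => pdy u t 0) (fun t => -P * (g1 (h t) / h t)) U := by
    intro t ht
    have hin : HasDerivAt (fun s : ℝ => t ^ 2 + (s - P) ^ 2) (2 * ((0:ℝ) - P)) 0 := by
      simpa using (((hasDerivAt_id (0:ℝ)).sub_const P).pow 2).const_add (t ^ 2)
    have hsqrtpt : Real.sqrt (t ^ 2 + ((0:ℝ) - P) ^ 2) = h t := by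
      rw [hhdef]
      norm_num
    have hne2 : (t ^ 2 + ((0:ℝ) - P) ^ 2 : ℝ) ≠ 0 := by
      have h5 : ((0:ℝ) - P) ≠ 0 := by simpa using hP
      have h6 := pow_two_pos_of_ne_zero h5
      nlinarith [sq_nonneg t]
    have hsq' := (Real.hasDerivAt_sqrt hne2).comp 0 hin
    have hgat : HasDerivAt g (g1 (h t)) (Real.sqrt (t ^ 2 + ((0:ℝ) - P) ^ 2)) := by
      rw [hsqrtpt]
      exact hdg (h t) (hUmem t ht)
    have hc := hgat.comp 0 hsq'
    have hc' : HasDerivAt (fun s => g (Real.sqrt (t ^ 2 + (s - P) ^ 2)))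
        (g1 (h t) * (1 / (2 * Real.sqrt (t ^ 2 + ((0:ℝ) - P) ^ 2)) * (2 * ((0:ℝ) - P)))) 0 := hc
    have hfun2 : (fun s => u t s) = fun s => g (Real.sqrt (t ^ 2 + (s - P) ^ 2)) := by
      funext s
      rw [hu]
    show deriv (fun s => u t s) 0 = -P * (g1 (h t) / h t)
    rw [hfun2, hc'.deriv, hsqrtpt]
    field_simp
    ring
  have hM1 : ∀ x ∈ U, HasDerivAt (fun t => -P * (g1 (h t) / h t))
      (-P * ((g2 (h x) * (x / h x) * h x - g1 (h x) * (x / h x)) / h x ^ 2)) x := by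
    intro x hx
    exact (((hdg1 (h x) (hUmem x hx)).comp x (hh' x)).div (hh' x) (hhne x)).const_mul (-P)
  have hM2 : HasDerivAt
      (fun x => -P * ((g2 (h x) * (x / h x) * h x - g1 (h x) * (x / h x)) / h x ^ 2))
      (-(g2 q) / P) 0 := by
    have hB : HasDerivAt (fun t => g2 (h t)) (g3 (h 0) * (0 / h 0)) 0 :=
      (hdg2 (h 0) (hUmem 0 hU0)).comp 0 (hh' 0)
    have hA : HasDerivAt (fun t => g1 (h t)) (g2 (h 0) * (0 / h 0)) 0 :=
      (hdg1 (h 0) (hUmem 0 hU0)).comp 0 (hh' 0)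
    have hNum := ((hB.fun_mul (hw' 0)).fun_mul (hh' 0)).fun_sub (hA.fun_mul (hw' 0))
    have hDen := (hh' 0).fun_pow 2
    have total := (hNum.fun_div hDen (pow_ne_zero 2 (hhne 0))).const_mul (-P)
    convert total using 1
    · rfl
    · rfl
    rw [hh0, hg']
    have hq4 : q ^ 4 = P ^ 4 := by nlinarith [hq2]
    simp only [zero_div, zero_mul, mul_zero, add_zero, zero_add, sub_zero, one_mul, mul_one]
    field_simp
    linear_combination (-g2 q) * hq4
  have hpd21 : pd u 2 1 0 0 = -(g2 q) / P := by
    have h1 : pd u 2 1 0 0 = deriv^[2] (fun t => pdy u t 0) 0 := by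
      simp only [pd, Function.iterate_one]
      exact pdx_iter (pdy u) 2 0 0
    rw [h1, iterate_two]
    have s1 : Set.EqOn (deriv (fun t => pdy u t 0))
        (fun x => -P * ((g2 (h x) * (x / h x) * h x - g1 (h x) * (x / h x)) / h x ^ 2)) U := by
      intro x hx
      rw [Filter.EventuallyEq.deriv_eq (Filter.eventuallyEq_of_mem (hUopen.mem_nhds hx) hslice)]
      exact (hM1 x hx).deriv
    rw [Filter.EventuallyEq.deriv_eq (Filter.eventuallyEq_of_mem (hUopen.mem_nhds hU0) s1)]
    exact hM2.deriv
  -- use the PDE at the origin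
  have hpde0 := hPDE 0 0 (by norm_num; positivity)
  have hfq : g2 q = -f (u 0 0) := by
    rw [hpd20, hpd02] at hpde0
    linarith
  refine ⟨?_, hpd30, ?_, ?_, ?_, ?_⟩
  · rw [hpd02, hfq]
  · rw [hpd21, hfq]
    ring
  · rw [hpd40, hfq]
    ring
  · rw [hpd21, hfq]
    field_simp
  · rw [hpd21, hpd02, hpd40, hfq]
    field_simp
end
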